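/- arXiv:2506.04092 — 3 statements merged into one kernel-verified Lean document; each statement's English description precedes it below -/
import Mathlib

section
/- The bound max{c_int, d*} on the approximation ratio of ℳ_order is tight: for every integer c ≥ 2 there exists an IKEP instance I whose compatibility graph contains an international Γ-cycle, with max{c_int(I), d*(I)} = c, such that for every pre-selection function σ one has opt(I) = c · SW(ℳ_order(I)). -/
open scoped Classical

/-- An `n`-partitioned compatibility graph: a finite directed graph on a finite
set of natural-number vertices, without self-loops, whose vertex set is
partitioned into `n` nonempty countries. -/
structure PartGraph (n : ℕ) where
  verts : Finset ℕ
  arcs : Finset (ℕ × ℕ)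
  arcs_mem : ∀ p ∈ arcs, p.1 ∈ verts ∧ p.2 ∈ verts
  no_loops : ∀ v, (v, v) ∉ arcs
  country : ℕ → Fin n
  country_nonempty : ∀ i : Fin n, ∃ v ∈ verts, country v = i

/-- Cyclic access to the entries of a list. -/
def cyc (l : List ℕ) (k : ℕ) : ℕ := l.getD (k % l.length) 0

/-- `l` is a (directed) cycle of `G`: a cyclic sequence of at least two distinct
vertices, consecutive ones (cyclically) joined by arcs. -/
def IsCycle {n : ℕ} (G : PartGraph n) (l : List ℕ) : Prop :=
  2 ≤ l.length ∧ l.Nodup ∧ (∀ v ∈ l, v ∈ G.verts) ∧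
    ∀ k < l.length, (cyc l k, cyc l (k + 1)) ∈ G.arcs

/-- All vertices of `l` belong to country `i`. -/
def IsNationalTo {n : ℕ} (G : PartGraph n) (l : List ℕ) (i : Fin n) : Prop :=
  ∀ v ∈ l, G.country v = i

/-- A national cycle: all vertices in one country. -/
def IsNational {n : ℕ} (G : PartGraph n) (l : List ℕ) : Prop :=
  ∃ i, IsNationalTo G l i

/-- An international cycle: not national (equivalently, for cycles, it contains
an international arc). -/
def IsInternational {n : ℕ} (G : PartGraph n) (l : List ℕ) : Prop :=
  ¬ IsNational G l

/-- Position `k` (taken cyclically) is the start of a `V_i`-segment of `l`: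
the vertex there is in country `i` but the cyclically preceding one is not. -/
def segStart {n : ℕ} (G : PartGraph n) (l : List ℕ) (i : Fin n) (k : ℕ) : Prop :=
  G.country (cyc l k) = i ∧ G.country (cyc l (k + l.length - 1)) ≠ i

/-- The size of the run of consecutive (cyclic) positions of `l`, starting at
position `k`, whose vertices are in country `i`.  At a segment start this is
exactly the size of that `V_i`-segment. -/
noncomputable def runLen {n : ℕ} (G : PartGraph n) (l : List ℕ) (i : Fin n) (k : ℕ) : ℕ :=
  ((Finset.range l.length).filter
    fun j => ∀ j' ≤ j, G.country (cyc l (k + j')) = i).card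

/-- The number of `V_i`-segments of the cycle `l`. -/
noncomputable def numSegs {n : ℕ} (G : PartGraph n) (l : List ℕ) (i : Fin n) : ℕ :=
  ((Finset.range l.length).filter fun k => segStart G l i k).card

/-- A set `Γ` of country-specific parameters for `n` countries. -/
structure Params (n : ℕ) where
  icl : ℕ∞
  ncl : Fin n → ℕ∞
  iss : Fin n → ℕ∞
  isn : Fin n → ℕ∞
  icl_ne_one : icl ≠ 1
  ncl_ne_one : ∀ i, ncl i ≠ 1
  iss_pos : ∀ i, 1 ≤ iss i
  isn_pos : ∀ i, 1 ≤ isn i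

/-- `l` is a `Γ`-cycle of `(G, 𝒱)`. -/
def IsGammaCycle {n : ℕ} (G : PartGraph n) (Γ : Params n) (l : List ℕ) : Prop :=
  IsCycle G l ∧
    ((∃ i, IsNationalTo G l i ∧ (l.length : ℕ∞) ≤ Γ.ncl i) ∨
      (IsInternational G l ∧ (l.length : ℕ∞) ≤ Γ.icl ∧
        (∀ i, ∀ k < l.length, segStart G l i k → (runLen G l i k : ℕ∞) ≤ Γ.iss i) ∧
        (∀ i, (numSegs G l i : ℕ∞) ≤ Γ.isn i)))

/-- A cycle packing of `G`: a set of pairwise vertex-disjoint cycles. -/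
def IsPacking {n : ℕ} (G : PartGraph n) (P : Finset (List ℕ)) : Prop :=
  (∀ l ∈ P, IsCycle G l) ∧
    ∀ l ∈ P, ∀ l' ∈ P, l ≠ l' → ∀ v ∈ l, v ∉ l'

/-- The size of a cycle packing: total number of arcs (= vertices) of its cycles. -/
def packSize (P : Finset (List ℕ)) : ℕ := ∑ l ∈ P, l.length

/-- A `Γ`-cycle packing of `(G, 𝒱)`. -/
def IsGammaPackingG {n : ℕ} (G : PartGraph n) (Γ : Params n) (P : Finset (List ℕ)) : Prop :=
  IsPacking G P ∧ ∀ l ∈ P, IsGammaCycle G Γ l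


/-- An IKEP instance `I = ⟨G, 𝒱, Γ⟩`. -/
structure IKEP where
  n : ℕ
  npos : 1 ≤ n
  G : PartGraph n
  prm : Params n

/-- A `Γ`-cycle packing of the instance `I`. -/
def IsGammaPacking (I : IKEP) (P : Finset (List ℕ)) : Prop :=
  IsGammaPackingG I.G I.prm P

/-- The utility `u_i(C)` of country `i` from the cycle `C`: the number of arcs
of `C` entering country `i`, i.e. the number of vertices of `C` in country `i`. -/
noncomputable def cycUtil {n : ℕ} (G : PartGraph n) (i : Fin n) (l : List ℕ) : ℕ :=
  (l.filter fun v => G.country v = i).length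

/-- The utility `u_i(𝒞)` of country `i` from a cycle packing. -/
noncomputable def packUtil {n : ℕ} (G : PartGraph n) (i : Fin n) (P : Finset (List ℕ)) : ℕ :=
  ∑ l ∈ P, cycUtil G i l

/-- `opt(I)`: the maximum size of a `Γ`-cycle packing of `G`. -/
noncomputable def optSize (I : IKEP) : ℕ :=
  sSup {m | ∃ P, IsGammaPacking I P ∧ packSize P = m}

/-- `nat_i(I)`: the maximum size of a `Γ`-cycle packing of the subgraph
`G[V_i]` induced by country `i` (all its cycles are national, so the only
constraint from `Γ` is the national cycle limit `ncl i`). -/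
noncomputable def natSize (I : IKEP) (i : Fin I.n) : ℕ :=
  sSup {m | ∃ P, IsPacking I.G P ∧ (∀ l ∈ P, IsNationalTo I.G l i) ∧
    (∀ l ∈ P, (l.length : ℕ∞) ≤ I.prm.ncl i) ∧ packSize P = m}

/-- A (randomised) mechanism: for every IKEP instance it returns one `Γ`-cycle
packing according to a (finitely supported) probability distribution on the
set `𝒟_I` of all `Γ`-cycle packings of `G`. -/
structure Mechanism where
  dist : IKEP → (Finset (List ℕ) →₀ ℝ)
  nonneg : ∀ I P, 0 ≤ dist I P
  sum_one : ∀ I, ((dist I).sum fun _ p => p) = 1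
  supp : ∀ I P, dist I P ≠ 0 → IsGammaPacking I P

/-- The expected utility `U_i(ℳ(I))` of country `i`. -/
noncomputable def expUtil (M : Mechanism) (I : IKEP) (i : Fin I.n) : ℝ :=
  (M.dist I).sum fun P p => p * (packUtil I.G i P : ℝ)

/-- The expected social welfare `SW(ℳ(I)) = Σ_i U_i(ℳ(I))`: the expected size
of the returned packing. -/
noncomputable def sw (M : Mechanism) (I : IKEP) : ℝ :=
  (M.dist I).sum fun P p => p * (packSize P : ℝ)

/-- Individual rationality. -/
def IndRational (M : Mechanism) : Prop :=
  ∀ I : IKEP, ∀ i : Fin I.n, (natSize I i : ℝ) ≤ expUtil M I i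

/-- Efficiency. -/
def Efficient (M : Mechanism) : Prop :=
  ∀ I : IKEP, sw M I = (optSize I : ℝ)

/-- `Γ' ≤ᵢ Γ`: country `i` misreports by declaring (weakly) smaller
international segment size and segment number; all other parameters agree. -/
def ParamLE {n : ℕ} (i : Fin n) (Γ' Γ : Params n) : Prop :=
  Γ'.icl = Γ.icl ∧ Γ'.ncl = Γ.ncl ∧
    Γ'.iss i ≤ Γ.iss i ∧ Γ'.isn i ≤ Γ.isn i ∧
    (∀ h, h ≠ i → Γ'.iss h = Γ.iss h) ∧ (∀ h, h ≠ i → Γ'.isn h = Γ.isn h)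

/-- Incentive compatibility (with respect to segment size and segment number). -/
def IncentiveCompatible (M : Mechanism) : Prop :=
  ∀ I : IKEP, ∀ i : Fin I.n, ∀ Γ' : Params I.n, ParamLE i Γ' I.prm →
    expUtil M { I with prm := Γ' } i ≤ expUtil M I i

/-- An international `Γ`-cycle of the instance `I`. -/
def IsIntlGammaCycle (I : IKEP) (l : List ℕ) : Prop :=
  IsGammaCycle I.G I.prm l ∧ IsInternational I.G l

/-- `c_int(I)`: the maximum length of an international `Γ`-cycle of `G`. -/
noncomputable def cInt (I : IKEP) : ℕ :=
  sSup {s | ∃ l, IsIntlGammaCycle I l ∧ l.length = s}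


/-! ### The mechanism `ℳ_order` -/

/-- Nodup lists with entries in a fixed finite set form a finite set. -/
lemma finite_nodup_lists (s : Finset ℕ) :
    {l : List ℕ | l.Nodup ∧ ∀ x ∈ l, x ∈ s}.Finite := by
  classical
  have h : {l : List ℕ | l.Nodup ∧ ∀ x ∈ l, x ∈ s} ⊆
      Set.range fun l : {l : List {x : ℕ // x ∈ s} // l.Nodup} =>
        l.1.map Subtype.val := by
    rintro l ⟨hnd, hmem⟩
    refine ⟨⟨l.attach.map fun x => ⟨x.1, hmem x.1 x.2⟩, ?_⟩, ?_⟩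
    · refine (List.nodup_attach.mpr hnd).map ?_
      intro x y hxy
      have h2 := congrArg Subtype.val hxy
      exact Subtype.ext h2
    · simp [List.map_map, Function.comp]
  exact (Set.finite_range _).subset h

/-- The canonical list representation of a cycle: the one (among its
rotations) starting at its smallest vertex.  Working with canonical
representatives identifies lists up to rotation, i.e. identifies the abstract
cycles. -/
def IsCanon (l : List ℕ) : Prop := ∀ v ∈ l, l.headI ≤ v

/-- Membership in `𝒳(Ĝ)`: `l` is (the canonical representation of) an
international cycle of `G` of length at most `icl` all of whose vertices
belong to `avail` (the vertices of `Ĝ`). -/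
def XCond {n : ℕ} (G : PartGraph n) (icl : ℕ∞) (avail : Finset ℕ) (l : List ℕ) : Prop :=
  IsCycle G l ∧ (∀ v ∈ l, v ∈ avail) ∧ IsInternational G l ∧
    (l.length : ℕ∞) ≤ icl ∧ IsCanon l

lemma XCond_finite {n : ℕ} (G : PartGraph n) (icl : ℕ∞) (avail : Finset ℕ) :
    {l | XCond G icl avail l}.Finite :=
  (finite_nodup_lists avail).subset fun _ hl => ⟨hl.1.2.1, hl.2.1⟩

/-- The set `𝒳(Ĝ)`, listed in some fixed order. -/
noncomputable def XList {n : ℕ} (G : PartGraph n) (icl : ℕ∞) (avail : Finset ℕ) :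
    List (List ℕ) :=
  (XCond_finite G icl avail).toFinset.toList

/-- `l` is (the canonical representation of) a substitute for the cycle `C`:
an international `Γ`-cycle of `G` whose vertex set is contained in that of `C`
and which has at most one `V_i`-segment for every country `i`. -/
def SubCond {n : ℕ} (G : PartGraph n) (Γ : Params n) (C l : List ℕ) : Prop :=
  IsGammaCycle G Γ l ∧ IsInternational G l ∧ (∀ v ∈ l, v ∈ C) ∧
    (∀ i, numSegs G l i ≤ 1) ∧ IsCanon l

lemma SubCond_finite {n : ℕ} (G : PartGraph n) (Γ : Params n) (C : List ℕ) :
    {l | SubCond G Γ C l}.Finite :=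
  (finite_nodup_lists C.toFinset).subset fun _ hl =>
    ⟨hl.1.1.2.1, fun x hx => List.mem_toFinset.mpr (hl.2.2.1 x hx)⟩

/-- The substitutes for `C`, listed in some fixed order. -/
noncomputable def subList {n : ℕ} (G : PartGraph n) (Γ : Params n) (C : List ℕ) :
    List (List ℕ) :=
  (SubCond_finite G Γ C).toFinset.toList

/-- `c` is vertex-disjoint from all cycles in `acc`. -/
def DisjFrom (acc : List (List ℕ)) (c : List ℕ) : Prop :=
  ∀ a ∈ acc, ∀ v ∈ c, v ∉ a

/-- Step 4 of `ℳ_order`: scan the ordering and greedily collect pairwise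
vertex-disjoint cycles. -/
noncomputable def greedy : List (List ℕ) → List (List ℕ) → List (List ℕ)
  | acc, [] => acc
  | acc, c :: rest => if DisjFrom acc c then greedy (c :: acc) rest else greedy acc rest

/-- Step 5 of `ℳ_order`, in expectation: process the greedily selected cycles
one by one (keeping `Γ`-cycles, replacing turnable non-`Γ`-cycles by a
uniformly random substitute, deleting the rest), finally accumulating them
into `acc` (initialised with `𝒞_nat`), and return the expected value of `f`
of the resulting packing. -/
noncomputable def stepExp {n : ℕ} (G : PartGraph n) (Γ : Params n)
    (f : Finset (List ℕ) → ℝ) : List (List ℕ) → Finset (List ℕ) → ℝ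
  | [], acc => f acc
  | C :: rest, acc =>
    if IsGammaCycle G Γ C then stepExp G Γ f rest (insert C acc)
    else if subList G Γ C ≠ [] then
      (((subList G Γ C).map fun D => stepExp G Γ f rest (insert D acc)).sum) /
        ((subList G Γ C).length : ℝ)
    else stepExp G Γ f rest acc

/-- The expected value of `f` of the packing returned by `ℳ_order` on input
`I`, given that Step 1 pre-selected the national packing `Cnat`: the ordering
of `𝒳(Ĝ)` in Step 3 is uniformly random, and the substitutes in Step 5 are
chosen independently and uniformly at random. -/
noncomputable def MorderExpFrom (I : IKEP) (Cnat : Finset (List ℕ))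
    (f : Finset (List ℕ) → ℝ) : ℝ :=
  let avail := I.G.verts \ Cnat.biUnion List.toFinset
  let XL := XList I.G I.prm.icl avail
  ((XL.permutations.map fun ord => stepExp I.G I.prm f (greedy [] ord) Cnat).sum) /
    (XL.permutations.length : ℝ)

/-- A national `Γ`-cycle packing (only the national cycle limits `ncl` are
relevant). -/
def IsNatPacking {n : ℕ} (G : PartGraph n) (ncl : Fin n → ℕ∞)
    (P : Finset (List ℕ)) : Prop :=
  IsPacking G P ∧ ∀ l ∈ P, ∃ i, IsNationalTo G l i ∧ (l.length : ℕ∞) ≤ ncl i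

/-- A maximum national `Γ`-cycle packing. -/
def IsMaxNatPacking {n : ℕ} (G : PartGraph n) (ncl : Fin n → ℕ∞)
    (P : Finset (List ℕ)) : Prop :=
  IsNatPacking G ncl P ∧ ∀ Q, IsNatPacking G ncl Q → packSize Q ≤ packSize P

/-- A pre-selection function `σ`: it assigns to every partitioned graph and
every national cycle-limit vector a maximum national `Γ`-cycle packing
(depending only on these data). -/
structure PreSelection where
  sel : (n : ℕ) → PartGraph n → (Fin n → ℕ∞) → Finset (List ℕ)
  isMax : ∀ (n : ℕ) (G : PartGraph n) (ncl : Fin n → ℕ∞),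
    IsMaxNatPacking G ncl (sel n G ncl)

/-- The expected value of `f` of the packing returned by `ℳ_order` (with
pre-selection function `σ`) on input `I`. -/
noncomputable def MorderExp (σ : PreSelection) (I : IKEP)
    (f : Finset (List ℕ) → ℝ) : ℝ :=
  MorderExpFrom I (σ.sel I.n I.G I.prm.ncl) f

/-- The expected utility `U_i(ℳ_order(I))` of country `i`. -/
noncomputable def MorderU (σ : PreSelection) (I : IKEP) (i : Fin I.n) : ℝ :=
  MorderExp σ I fun P => (packUtil I.G i P : ℝ)

/-- The expected social welfare `SW(ℳ_order(I))`: the expected size of the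
returned packing. -/
noncomputable def MorderSW (σ : PreSelection) (I : IKEP) : ℝ :=
  MorderExp σ I fun P => (packSize P : ℝ)


/-- The set of arcs of a cycle `l` (this determines the cycle up to rotation
of the list representation). -/
def arcSetOf (l : List ℕ) : Finset (ℕ × ℕ) :=
  (Finset.range l.length).image fun k => (cyc l k, cyc l (k + 1))

/-- The international cycle degree `d(C)` of an international `Γ`-cycle `C`:
the number of (distinct) international `Γ`-cycles of `G` sharing at least one
vertex with `C` (`C` itself included); cycles are counted via their arc sets,
i.e. up to rotation of their list representations. -/
noncomputable def intlDeg (I : IKEP) (C : List ℕ) : ℕ :=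
  {S : Finset (ℕ × ℕ) | ∃ l, IsIntlGammaCycle I l ∧ arcSetOf l = S ∧
    ∃ v ∈ l, v ∈ C}.ncard

/-- `d*(I)`: the maximum international cycle degree over all international
`Γ`-cycles of `G`. -/
noncomputable def dStar (I : IKEP) : ℕ :=
  sSup {d | ∃ C, IsIntlGammaCycle I C ∧ intlDeg I C = d}

/-!
The instance has a hub vertex `0` in country `0`, a long cycle `0 → 1 → ⋯ → c - 1 → 0` whose
other vertices lie in country `1`, and `c - 1` short cycles `0 → c + 2j → c + 2j + 1 → 0` whose
other two vertices lie in country `2`. A rank decreasing along all arcs that avoid the hub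
forces every cycle through the hub, and every other vertex has a single outgoing arc, so every
cycle is a rotation of one of these `c` cycles. National cycles are forbidden and segments in
country `2` must be single vertices, so the long cycle is the only `Γ`-cycle and the short
cycles have no substitutes; hence `opt = c_int = c` and `d* = 1`. Nothing is pre-selected, and
since all candidates meet at the hub, `ℳ_order` keeps only the first cycle of a uniformly random
ordering, which is the long cycle with probability `1 / c`: `SW = 1`.
-/

open scoped Nat

namespace List

variable {α M : Type*} [Inhabited α] [AddCommMonoid M]

theorem sum_map_headI_permutations'Aux (g : α → M) (a : α) (q : List α) :
    ((permutations'Aux a q).map fun p => g p.headI).sum = g a + q.length • g q.headI := by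
  cases q with
  | nil => simp [permutations'Aux]
  | cons b t => simp [permutations'Aux, Function.comp_def, length_permutations'Aux]

theorem sum_map_headI_permutations'_cons (g : α → M) (t : List α) (a : α) :
    (((a :: t).permutations').map fun p => g p.headI).sum
      = t.length ! • (g a + (t.map g).sum) := by
  induction t generalizing a with
  | nil => simp [permutations']
  | cons b t ih =>
    have hlen : ∀ q ∈ (b :: t).permutations', q.length = t.length + 1 := fun q hq => by
      simpa using (mem_permutations'.mp hq).length_eq
    have hcard : ((b :: t).permutations').length = (t.length + 1)! := by
      rw [← (permutations_perm_permutations' _).length_eq, length_permutations, length_cons]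
    calc (((a :: b :: t).permutations').map fun p => g p.headI).sum
        = (((b :: t).permutations').map fun q => g a + (t.length + 1) • g q.headI).sum := by
          rw [show (a :: b :: t).permutations'
            = (b :: t).permutations'.flatMap (permutations'Aux a) from rfl]
          simp only [flatMap_def, map_flatten, sum_flatten, map_map]
          exact congrArg sum (map_congr_left fun q hq => by
            simp [sum_map_headI_permutations'Aux, hlen q hq])
      _ = (t.length + 1)! • (g a + ((b :: t).map g).sum) := by
          rw [sum_map_add, map_const', sum_replicate, hcard,
            show (fun q : List α => (t.length + 1) • g q.headI)
              = (fun x => (t.length + 1) • x) ∘ fun q => g q.headI from rfl,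
            ← map_map, ← smul_sum, ih b, smul_smul, ← Nat.factorial_succ]
          simp only [map_cons, sum_cons, smul_add]

theorem sum_map_headI_permutations (g : α → M) {l : List α} (hl : l ≠ []) :
    (l.permutations.map fun p => g p.headI).sum = (l.length - 1)! • (l.map g).sum := by
  obtain ⟨a, t, rfl⟩ := exists_cons_of_ne_nil hl
  rw [((permutations_perm_permutations' _).map _).sum_eq, sum_map_headI_permutations'_cons]
  simp

end List

section Cycles

variable {n : ℕ} {G : PartGraph n} {l : List ℕ}

theorem cyc_mod (l : List ℕ) (k : ℕ) : cyc l (k % l.length) = cyc l k := by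
  simp [cyc]

theorem cyc_mod_add (l : List ℕ) (k m : ℕ) : cyc l (k % l.length + m) = cyc l (k + m) := by
  rw [← cyc_mod l (k % l.length + m), Nat.mod_add_mod, cyc_mod]

theorem cyc_add_length (l : List ℕ) (k : ℕ) : cyc l (k + l.length) = cyc l k := by
  rw [← cyc_mod, Nat.add_mod_right, cyc_mod]

theorem cyc_length (l : List ℕ) : cyc l l.length = cyc l 0 := by
  rw [← cyc_mod, Nat.mod_self]

theorem cyc_zero (l : List ℕ) : cyc l 0 = l.headI := by
  cases l <;> rfl

theorem cyc_eq_getElem {k : ℕ} (hk : k < l.length) : cyc l k = l[k] := by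
  rw [cyc, Nat.mod_eq_of_lt hk, List.getD_eq_getElem]

theorem cyc_mem (hl : l ≠ []) (k : ℕ) : cyc l k ∈ l := by
  rw [← cyc_mod, cyc_eq_getElem (Nat.mod_lt _ (List.length_pos_iff.mpr hl))]
  exact List.getElem_mem _

theorem cyc_inj (hl : l.Nodup) {j k : ℕ} (hj : j < l.length) (hk : k < l.length) :
    cyc l j = cyc l k ↔ j = k := by
  rw [cyc_eq_getElem hj, cyc_eq_getElem hk, hl.getElem_inj_iff]

theorem cyc_rotate (l : List ℕ) (r k : ℕ) : cyc (l.rotate r) k = cyc l (r + k) := by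
  rcases eq_or_ne l [] with rfl | hl
  · simp [cyc]
  have hpos := List.length_pos_iff.mpr hl
  simp only [cyc, List.length_rotate]
  rw [List.getD_eq_getElem _ _ (by simpa using Nat.mod_lt k hpos), List.getElem_rotate,
    List.getD_eq_getElem _ _ (Nat.mod_lt _ hpos)]
  simp only [add_comm, Nat.add_mod_mod]

theorem arcSetOf_rotate_subset (l : List ℕ) (r : ℕ) : arcSetOf (l.rotate r) ⊆ arcSetOf l := by
  intro p hp
  obtain ⟨k, -, rfl⟩ := Finset.mem_image.mp hp
  have hl : l ≠ [] := by rintro rfl; simp [arcSetOf] at hp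
  refine Finset.mem_image.mpr ⟨(r + k) % l.length, ?_, ?_⟩
  · exact Finset.mem_range.mpr (Nat.mod_lt _ (List.length_pos_iff.mpr hl))
  · rw [cyc_rotate, cyc_rotate, cyc_mod, cyc_mod_add, add_assoc]

theorem List.IsRotated.arcSetOf_eq {l' : List ℕ} (h : l ~r l') : arcSetOf l = arcSetOf l' := by
  obtain ⟨r', hr'⟩ := h.symm
  obtain ⟨r, rfl⟩ := h
  have hback := arcSetOf_rotate_subset (l.rotate r) r'
  rw [hr'] at hback
  exact hback.antisymm (arcSetOf_rotate_subset l r)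

namespace IsCycle

theorem ne_nil (hl : IsCycle G l) : l ≠ [] := by
  rintro rfl; simpa using hl.1

theorem arc_mem (hl : IsCycle G l) (k : ℕ) : (cyc l k, cyc l (k + 1)) ∈ G.arcs := by
  rw [← cyc_mod, ← cyc_mod_add]
  exact hl.2.2.2 _ (Nat.mod_lt _ (List.length_pos_iff.mpr hl.ne_nil))

theorem rotate (hl : IsCycle G l) (r : ℕ) : IsCycle G (l.rotate r) := by
  refine ⟨by simpa using hl.1, List.nodup_rotate.mpr hl.2.1,
    fun v hv => hl.2.2.1 v (List.mem_rotate.mp hv), fun k _ => ?_⟩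
  rw [cyc_rotate, cyc_rotate, ← add_assoc]
  exact hl.arc_mem _

theorem mem_of_rank (hl : IsCycle G l) {v₀ : ℕ} (ρ : ℕ → ℕ)
    (hρ : ∀ u w, (u, w) ∈ G.arcs → u ≠ v₀ → w ≠ v₀ → ρ w < ρ u) : v₀ ∈ l := by
  by_contra hv₀
  have hne : ∀ k, cyc l k ≠ v₀ := fun k h => hv₀ (h ▸ cyc_mem hl.ne_nil k)
  have hdesc : ∀ k, ρ (cyc l k) + k ≤ ρ (cyc l 0) := by
    intro k
    induction k with
    | zero => simp
    | succ k ih => have := hρ _ _ (hl.arc_mem k) (hne k) (hne (k + 1)); omega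
  have := hdesc (ρ (cyc l 0) + 1)
  omega

theorem eq_of_cyc_zero_of_cyc_one {l' : List ℕ} (hl : IsCycle G l) (hl' : IsCycle G l')
    (h0 : cyc l 0 = cyc l' 0) (h1 : cyc l 1 = cyc l' 1)
    (hfun : ∀ u v w, u ≠ cyc l 0 → (u, v) ∈ G.arcs → (u, w) ∈ G.arcs → v = w) : l = l' := by
  have hret : ∀ {m : List ℕ} {k : ℕ}, IsCycle G m → 0 < k → k ≤ m.length →
      cyc m k = cyc m 0 → k = m.length := by
    intro m k hm hk hkm h
    by_contra hne
    exact absurd ((cyc_inj hm.2.1 (by omega) (by omega)).mp h) (by omega)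
  have h2 := hl.1
  have h2' := hl'.1
  set s := min l.length l'.length
  have hsl : s ≤ l.length := min_le_left _ _
  have hsl' : s ≤ l'.length := min_le_right _ _
  have hagree : ∀ k, 1 ≤ k → k ≤ s → cyc l k = cyc l' k := by
    intro k hk hks
    induction k, hk using Nat.le_induction with
    | base => exact h1
    | succ k hk ih =>
      have hlk : cyc l k ≠ cyc l 0 := fun h =>
        absurd (hret hl (by omega) (by omega) h) (by omega)
      exact hfun _ _ _ hlk (hl.arc_mem k) ((ih (by omega)).symm ▸ hl'.arc_mem k)
  have hs := hagree s (by omega) le_rfl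
  have hlen : l.length = l'.length := by
    rcases le_total l.length l'.length with h | h
    · have hs_eq : s = l.length := min_eq_left h
      have := hret hl' (by omega) hsl' (by rw [← hs, hs_eq, cyc_length, h0])
      omega
    · have hs_eq : s = l'.length := min_eq_right h
      have := hret hl (by omega) hsl (by rw [hs, hs_eq, cyc_length, h0])
      omega
  refine List.ext_getElem hlen fun k hk hk' => ?_
  rw [← cyc_eq_getElem hk, ← cyc_eq_getElem hk']
  rcases Nat.eq_zero_or_pos k with rfl | hk0
  · exact h0
  · exact hagree k hk0 (by omega)

/-- The `V_i`-segment starting at position `k + 1` has at least two vertices. -/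
theorem not_isGammaCycle_of_segment {Γ : Params n} (hl : IsCycle G l) {i : Fin n} {k : ℕ}
    (hiss : Γ.iss i ≤ 1) (h0 : G.country (cyc l k) ≠ i) (h1 : G.country (cyc l (k + 1)) = i)
    (h2 : G.country (cyc l (k + 2)) = i) : ¬ IsGammaCycle G Γ l := by
  have hlen := hl.1
  rintro ⟨-, ⟨i', hnat, -⟩ | ⟨-, -, hiss', -⟩⟩
  · exact h0 ((hnat _ (cyc_mem hl.ne_nil k)).trans (hnat _ (cyc_mem hl.ne_nil (k + 1))).symm
      |>.trans h1)
  set s := (k + 1) % l.length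
  have hs : s < l.length := Nat.mod_lt _ (by omega)
  have hstart : segStart G l i s := by
    refine ⟨by rwa [cyc_mod], ?_⟩
    rwa [Nat.add_sub_assoc (by omega), cyc_mod_add, add_assoc, Nat.add_sub_cancel' (by omega),
      cyc_add_length]
  have hrun : 2 ≤ runLen G l i s := by
    refine (Finset.card_pair zero_ne_one).symm.le.trans (Finset.card_le_card fun j hj => ?_)
    simp only [Finset.mem_insert, Finset.mem_singleton] at hj
    refine Finset.mem_filter.mpr ⟨Finset.mem_range.mpr (by omega), fun j' hj' => ?_⟩
    obtain rfl | rfl : j' = 0 ∨ j' = 1 := by omega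
    · rwa [cyc_mod_add]
    · rwa [cyc_mod_add, add_assoc]
  have := (hiss' i s hs hstart).trans hiss
  exact absurd (by exact_mod_cast this : runLen G l i s ≤ 1) (by omega)

end IsCycle

end Cycles

theorem IsPacking.card_le_one {n : ℕ} {G : PartGraph n} {P : Finset (List ℕ)}
    (hP : IsPacking G P) {v : ℕ} (hv : ∀ l, IsCycle G l → v ∈ l) : P.card ≤ 1 :=
  Finset.card_le_one.mpr fun a ha b hb => by
    by_contra hab
    exact hP.2 a ha b hb hab v (hv a (hP.1 a ha)) (hv b (hP.1 b hb))

theorem IsNatPacking.eq_empty_of_ncl_zero {n : ℕ} {G : PartGraph n} {P : Finset (List ℕ)}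
    (hP : IsNatPacking G (fun _ => 0) P) : P = ∅ :=
  Finset.eq_empty_of_forall_notMem fun l hl => by
    obtain ⟨i, -, hlen⟩ := hP.2 l hl
    have := (hP.1.1 l hl).1
    have : l.length = 0 := by exact_mod_cast nonpos_iff_eq_zero.mp hlen
    omega

theorem greedy_eq_self {acc t : List (List ℕ)} (h : ∀ x ∈ t, ¬ DisjFrom acc x) :
    greedy acc t = acc := by
  induction t with
  | nil => rfl
  | cons x t ih =>
    rw [greedy, if_neg (h x List.mem_cons_self)]
    exact ih fun y hy => h y (List.mem_cons_of_mem x hy)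

theorem greedy_nil_cons {a : List ℕ} {t : List (List ℕ)} (h : ∀ x ∈ t, ∃ v ∈ x, v ∈ a) :
    greedy [] (a :: t) = [a] := by
  rw [greedy, if_pos (by simp [DisjFrom])]
  refine greedy_eq_self fun x hx hdisj => ?_
  obtain ⟨v, hvx, hva⟩ := h x hx
  exact hdisj a List.mem_cons_self v hvx hva

theorem isCycle_of_mem_XList {n : ℕ} {G : PartGraph n} {icl : ℕ∞} {avail : Finset ℕ}
    {C : List ℕ} (hC : C ∈ XList G icl avail) : IsCycle G C :=
  ((Set.Finite.mem_toFinset _).mp (Finset.mem_toList.mp hC)).1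

/-- When nothing is pre-selected and the candidate international cycles pairwise intersect,
the greedy packing consists of the first cycle of the random ordering alone, which is
uniformly distributed. -/
theorem MorderExpFrom_empty_of_pairwise_meet (I : IKEP) (f : Finset (List ℕ) → ℝ)
    (hne : XList I.G I.prm.icl I.G.verts ≠ [])
    (hmeet : ∀ C ∈ XList I.G I.prm.icl I.G.verts, ∀ D ∈ XList I.G I.prm.icl I.G.verts,
      ∃ v ∈ D, v ∈ C) :
    MorderExpFrom I ∅ f = ((XList I.G I.prm.icl I.G.verts).map fun C =>
      stepExp I.G I.prm f [C] ∅).sum / (XList I.G I.prm.icl I.G.verts).length := by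
  simp only [MorderExpFrom, Finset.biUnion_empty, Finset.sdiff_empty]
  set X := XList I.G I.prm.icl I.G.verts
  have hfirst : ∀ ord ∈ X.permutations,
      stepExp I.G I.prm f (greedy [] ord) ∅ = stepExp I.G I.prm f [ord.headI] ∅ := by
    intro ord hord
    have hperm := List.mem_permutations.mp hord
    have hmem : ∀ C ∈ ord, C ∈ X := fun C hC => hperm.subset hC
    obtain ⟨a, t, rfl⟩ := List.exists_cons_of_ne_nil fun h : ord = [] =>
      hne (h ▸ hperm).nil_eq.symm
    rw [greedy_nil_cons fun x hx => hmeet _ (hmem a List.mem_cons_self) _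
      (hmem x (List.mem_cons_of_mem a hx)), List.headI_cons]
  have hpos : 0 < X.length := List.length_pos_iff.mpr hne
  rw [List.map_congr_left hfirst,
    List.sum_map_headI_permutations (fun C => stepExp I.G I.prm f [C] ∅) hne,
    List.length_permutations, nsmul_eq_mul, ← Nat.mul_factorial_pred hpos.ne']
  push_cast
  field_simp

namespace TightExample

def next (c v : ℕ) : ℕ := if v + 1 = c ∨ (c ≤ v ∧ (v - c) % 2 = 1) then 0 else v + 1

def IsArc (c v w : ℕ) : Prop :=
  (v = 0 ∧ (w = 1 ∨ (c ≤ w ∧ (w - c) % 2 = 0))) ∨ (v ≠ 0 ∧ w = next c v)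

def country (c v : ℕ) : Fin 3 := if v = 0 then 0 else if v < c then 1 else 2

noncomputable def graph (c : ℕ) (hc : 2 ≤ c) : PartGraph 3 where
  verts := Finset.range (3 * c - 2)
  arcs := (Finset.range (3 * c - 2) ×ˢ Finset.range (3 * c - 2)).filter
    fun p => IsArc c p.1 p.2
  arcs_mem := fun p hp => Finset.mem_product.mp (Finset.mem_filter.mp hp).1
  no_loops := fun v hv => by
    obtain ⟨-, hv⟩ := Finset.mem_filter.mp hv
    simp only [IsArc, next] at hv
    split_ifs at hv <;> omega
  country := country c
  country_nonempty := by
    intro i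
    fin_cases i
    · exact ⟨0, Finset.mem_range.mpr (by omega), rfl⟩
    · exact ⟨1, Finset.mem_range.mpr (by omega), by simp [country]; omega⟩
    · exact ⟨c, Finset.mem_range.mpr (by omega), by simp [country]; omega⟩

def params : Params 3 where
  icl := ⊤
  ncl := fun _ => 0
  iss := fun i => if i = 2 then 1 else ⊤
  isn := fun _ => ⊤
  icl_ne_one := by simp
  ncl_ne_one := by simp
  iss_pos := fun i => by split_ifs <;> simp
  isn_pos := fun _ => le_top

noncomputable abbrev ikep (c : ℕ) (hc : 2 ≤ c) : IKEP := ⟨3, by norm_num, graph c hc, params⟩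

def longCycle (c : ℕ) : List ℕ := List.range c

def shortCycle (c j : ℕ) : List ℕ := [0, c + 2 * j, c + 2 * j + 1]

variable {c : ℕ} (hc : 2 ≤ c) {l : List ℕ}

theorem mem_arcs {v w : ℕ} :
    (v, w) ∈ (graph c hc).arcs ↔ v < 3 * c - 2 ∧ w < 3 * c - 2 ∧ IsArc c v w := by
  simp [graph, and_assoc]

@[simp] theorem country_zero : country c 0 = 0 := rfl

theorem country_of_lt {v : ℕ} (h0 : v ≠ 0) (h : v < c) : country c v = 1 := by
  simp [country, h0, h]

theorem country_of_le {v : ℕ} (hc : 0 < c) (h : c ≤ v) : country c v = 2 := by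
  simp [country, show v ≠ 0 by omega, show ¬ v < c by omega]

theorem zero_mem_of_isCycle (hl : IsCycle (graph c hc) l) : 0 ∈ l :=
  hl.mem_of_rank (fun v => if v < c then c - v else 2 - (v - c) % 2) fun u w h hu hw => by
    simp only [mem_arcs, IsArc, next] at h
    split_ifs at h ⊢ <;> omega

theorem cyc_longCycle (hc : 0 < c) (k : ℕ) : cyc (longCycle c) k = k % c := by
  rw [← cyc_mod, cyc_eq_getElem (by simpa [longCycle] using Nat.mod_lt k hc)]
  simp [longCycle]

theorem longCycle_isCycle : IsCycle (graph c hc) (longCycle c) := by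
  refine ⟨by simpa [longCycle] using hc, List.nodup_range, fun v hv => ?_, fun k hk => ?_⟩
  · simp only [longCycle, List.mem_range] at hv
    exact Finset.mem_range.mpr (by omega)
  · simp only [longCycle, List.length_range] at hk
    rw [cyc_longCycle (by omega), cyc_longCycle (by omega), Nat.mod_eq_of_lt hk, mem_arcs]
    rcases Nat.lt_or_ge (k + 1) c with hk1 | hk1
    · rw [Nat.mod_eq_of_lt hk1]
      simp only [IsArc, next]
      split_ifs <;> omega
    · rw [show k + 1 = c by omega, Nat.mod_self]
      simp only [IsArc, next]
      split_ifs <;> omega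

theorem longCycle_isInternational : IsInternational (graph c hc) (longCycle c) := by
  rintro ⟨i, hi⟩
  have h0 : country c 0 = i := hi 0 (by simp [longCycle]; omega)
  have h1 : country c 1 = i := hi 1 (by simp [longCycle]; omega)
  rw [country_zero, ← h1, country_of_lt one_ne_zero (by omega)] at h0
  exact absurd h0 (by decide)

theorem longCycle_isGammaCycle : IsGammaCycle (graph c hc) params (longCycle c) := by
  refine ⟨longCycle_isCycle hc, Or.inr ⟨longCycle_isInternational hc, le_top,
    fun i k hk hstart => ?_, fun _ => le_top⟩⟩
  by_cases hi : i = 2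
  · subst hi
    have hk' : k < c := by simpa [longCycle] using hk
    have := hstart.1
    rw [cyc_longCycle (by omega), Nat.mod_eq_of_lt hk'] at this
    change country c k = 2 at this
    rcases Nat.eq_zero_or_pos k with rfl | hk0
    · rw [country_zero] at this
      exact absurd this (by decide)
    · rw [country_of_lt hk0.ne' hk'] at this
      exact absurd this (by decide)
  · simp [params, hi]

theorem longCycle_isIntlGammaCycle : IsIntlGammaCycle (ikep c hc) (longCycle c) :=
  ⟨longCycle_isGammaCycle hc, longCycle_isInternational hc⟩

theorem shortCycle_isCycle {j : ℕ} (hj : j < c - 1) :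
    IsCycle (graph c hc) (shortCycle c j) := by
  refine ⟨by simp [shortCycle], by simp [shortCycle]; omega, fun v hv => ?_, fun k hk => ?_⟩
  · simp only [shortCycle, List.mem_cons, List.not_mem_nil, or_false] at hv
    exact Finset.mem_range.mpr (by omega)
  · simp only [shortCycle, List.length_cons, List.length_nil] at hk
    interval_cases k <;> simp [cyc, shortCycle, mem_arcs, IsArc, next] <;> omega

theorem shortCycle_isInternational {j : ℕ} :
    IsInternational (graph c hc) (shortCycle c j) := by
  rintro ⟨i, hi⟩
  have h0 : country c 0 = i := hi 0 (by simp [shortCycle])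
  have h1 : country c (c + 2 * j) = i := hi _ (by simp [shortCycle])
  rw [country_zero, ← h1, country_of_le (by omega) (by omega)] at h0
  exact absurd h0 (by decide)

theorem eq_longCycle_or_shortCycle (hl : IsCycle (graph c hc) l) (h0 : cyc l 0 = 0) :
    l = longCycle c ∨ ∃ j < c - 1, l = shortCycle c j := by
  have hfun : ∀ u v w, u ≠ cyc l 0 → (u, v) ∈ (graph c hc).arcs → (u, w) ∈ (graph c hc).arcs →
      v = w := by
    intro u v w hu hv hw
    simp only [mem_arcs, IsArc] at hv hw
    omega
  have h1 := hl.arc_mem 0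
  rw [h0, zero_add, mem_arcs] at h1
  obtain ⟨-, hlt, (⟨-, h1 | ⟨hc1, heven⟩⟩ | ⟨h00, -⟩)⟩ := h1
  · left
    refine hl.eq_of_cyc_zero_of_cyc_one (longCycle_isCycle hc) ?_ ?_ hfun
    · rw [h0, cyc_longCycle (by omega)]; simp
    · rw [h1, cyc_longCycle (by omega), Nat.mod_eq_of_lt (by omega)]
  · right
    refine ⟨(cyc l 1 - c) / 2, by omega, ?_⟩
    refine hl.eq_of_cyc_zero_of_cyc_one (shortCycle_isCycle hc (by omega)) ?_ ?_ hfun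
    · rw [h0]; rfl
    · change cyc l 1 = c + 2 * ((cyc l 1 - c) / 2)
      omega
  · exact absurd rfl h00

theorem isRotated_longCycle_or_shortCycle (hl : IsCycle (graph c hc) l) :
    l ~r longCycle c ∨ ∃ j < c - 1, l ~r shortCycle c j := by
  obtain ⟨r, hr, hr0⟩ := List.mem_iff_getElem.mp (zero_mem_of_isCycle hc hl)
  have h0 : cyc (l.rotate r) 0 = 0 := by rw [cyc_rotate, add_zero, cyc_eq_getElem hr, hr0]
  rcases eq_longCycle_or_shortCycle hc (hl.rotate r) h0 with h | ⟨j, hj, h⟩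
  · exact Or.inl ⟨r, h⟩
  · exact Or.inr ⟨j, hj, r, h⟩

theorem isRotated_longCycle_of_isGammaCycle (hg : IsGammaCycle (graph c hc) params l) :
    l ~r longCycle c := by
  refine (isRotated_longCycle_or_shortCycle hc hg.1).resolve_right ?_
  rintro ⟨j, hj, r, hr⟩
  have hshort : ∀ m, cyc l (r + m) = cyc (shortCycle c j) m := fun m => by
    rw [← cyc_rotate, hr]
  refine hg.1.not_isGammaCycle_of_segment (i := 2) (k := r) (by simp [params]) ?_ ?_ ?_ hg
  · rw [← add_zero r, hshort]
    exact (by decide : (0 : Fin 3) ≠ 2)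
  · rw [hshort]
    exact country_of_le (c := c) (v := c + 2 * j) (by omega) (by omega)
  · rw [hshort]
    exact country_of_le (c := c) (v := c + 2 * j + 1) (by omega) (by omega)

theorem length_eq_of_isGammaCycle (hg : IsGammaCycle (graph c hc) params l) :
    l.length = c :=
  (isRotated_longCycle_of_isGammaCycle hc hg).perm.length_eq.trans (List.length_range)

theorem one_mem_of_isGammaCycle (hg : IsGammaCycle (graph c hc) params l) : 1 ∈ l :=
  (isRotated_longCycle_of_isGammaCycle hc hg).mem_iff.mpr (by simp [longCycle]; omega)

theorem one_notMem_shortCycle (hc : 2 ≤ c) (j : ℕ) : 1 ∉ shortCycle c j := by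
  simp [shortCycle]
  omega

theorem shortCycle_ne_longCycle (hc : 2 ≤ c) (j : ℕ) : shortCycle c j ≠ longCycle c :=
  fun h => one_notMem_shortCycle hc j (h ▸ by simp [longCycle]; omega)

theorem shortCycle_not_isGammaCycle (j : ℕ) :
    ¬ IsGammaCycle (graph c hc) params (shortCycle c j) :=
  fun hg => one_notMem_shortCycle hc j (one_mem_of_isGammaCycle hc hg)

theorem subList_shortCycle (j : ℕ) : subList (graph c hc) params (shortCycle c j) = [] := by
  rw [subList, Finset.toList_eq_nil, Set.Finite.toFinset_eq_empty,
    Set.eq_empty_iff_forall_notMem]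
  exact fun l hl => one_notMem_shortCycle hc j (hl.2.2.1 1 (one_mem_of_isGammaCycle hc hl.1))

theorem optSize_ikep : optSize (ikep c hc) = c := by
  refine IsGreatest.csSup_eq ⟨⟨{longCycle c}, ⟨⟨by simpa using longCycle_isCycle hc, by simp⟩,
    by simpa using longCycle_isGammaCycle hc⟩, by simp [packSize, longCycle]⟩, ?_⟩
  rintro m ⟨P, hP, rfl⟩
  calc packSize P ≤ P.card • c := Finset.sum_le_card_nsmul _ _ _ fun l hl =>
        (length_eq_of_isGammaCycle hc (hP.2 l hl)).le
    _ ≤ 1 • c := Nat.mul_le_mul_right _ (hP.1.card_le_one fun _ => zero_mem_of_isCycle hc)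
    _ = c := one_smul _ _

theorem cInt_ikep : cInt (ikep c hc) = c := by
  refine IsGreatest.csSup_eq
    ⟨⟨longCycle c, longCycle_isIntlGammaCycle hc, by simp [longCycle]⟩, ?_⟩
  rintro s ⟨l, ⟨hg, -⟩, rfl⟩
  exact (length_eq_of_isGammaCycle hc hg).le

theorem intlDeg_ikep {C : List ℕ} (hC : IsIntlGammaCycle (ikep c hc) C) :
    intlDeg (ikep c hc) C = 1 := by
  refine Set.ncard_eq_one.mpr ⟨arcSetOf (longCycle c), Set.eq_singleton_iff_unique_mem.mpr
    ⟨⟨longCycle c, longCycle_isIntlGammaCycle hc, rfl, 0, ?_,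
      zero_mem_of_isCycle hc hC.1.1⟩, ?_⟩⟩
  · simp [longCycle]; omega
  · rintro S ⟨l, ⟨hg, -⟩, rfl, -⟩
    exact (isRotated_longCycle_of_isGammaCycle hc hg).arcSetOf_eq

theorem dStar_ikep : dStar (ikep c hc) = 1 := by
  refine IsGreatest.csSup_eq ⟨⟨longCycle c, longCycle_isIntlGammaCycle hc,
    intlDeg_ikep hc (longCycle_isIntlGammaCycle hc)⟩, ?_⟩
  rintro d ⟨C, hC, rfl⟩
  exact (intlDeg_ikep hc hC).le

def candidates (c : ℕ) : Finset (List ℕ) :=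
  insert (longCycle c) ((Finset.range (c - 1)).image (shortCycle c))

theorem longCycle_mem_candidates (c : ℕ) : longCycle c ∈ candidates c :=
  Finset.mem_insert_self _ _

theorem XList_graph :
    XList (graph c hc) params.icl (graph c hc).verts = (candidates c).toList := by
  rw [XList]
  congr 1
  ext l
  simp only [Set.Finite.mem_toFinset, candidates, Finset.mem_insert,
    Finset.mem_image, Finset.mem_range]
  constructor
  · rintro ⟨hl, -, -, -, hcanon⟩
    have h0 : cyc l 0 = 0 := by
      rw [cyc_zero]; exact Nat.le_zero.mp (hcanon 0 (zero_mem_of_isCycle hc hl))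
    rcases eq_longCycle_or_shortCycle hc hl h0 with h | ⟨j, hj, h⟩
    · exact Or.inl h
    · exact Or.inr ⟨j, hj, h.symm⟩
  · rintro (rfl | ⟨j, hj, rfl⟩)
    · refine ⟨longCycle_isCycle hc, (longCycle_isCycle hc).2.2.1,
        longCycle_isInternational hc, le_top, fun v _ => ?_⟩
      rw [← cyc_zero, cyc_longCycle (by omega)]
      exact Nat.zero_le _
    · refine ⟨shortCycle_isCycle hc hj, (shortCycle_isCycle hc hj).2.2.1,
        shortCycle_isInternational hc, le_top, fun v _ => Nat.zero_le _⟩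

theorem card_candidates (hc : 2 ≤ c) : (candidates c).card = c := by
  have hinj : Function.Injective (shortCycle c) := fun j j' h => by
    simp only [shortCycle, List.cons.injEq] at h
    omega
  rw [candidates, Finset.card_insert_of_notMem, Finset.card_image_of_injective _ hinj,
    Finset.card_range]
  · omega
  · rintro hmem
    obtain ⟨j, -, hj⟩ := Finset.mem_image.mp hmem
    exact shortCycle_ne_longCycle hc j hj

theorem MorderSW_ikep (σ : PreSelection) : MorderSW σ (ikep c hc) = 1 := by
  have hsel : σ.sel 3 (graph c hc) params.ncl = ∅ :=
    (σ.isMax 3 (graph c hc) params.ncl).1.eq_empty_of_ncl_zero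
  have hne : XList (graph c hc) params.icl (graph c hc).verts ≠ [] := by
    rw [XList_graph hc, ne_eq, Finset.toList_eq_nil, ← ne_eq, ← Finset.nonempty_iff_ne_empty]
    exact ⟨_, longCycle_mem_candidates c⟩
  have hstep : ∀ C ∈ candidates c,
      stepExp (graph c hc) params (fun P => (packSize P : ℝ)) [C] ∅
        = if C = longCycle c then (c : ℝ) else 0 := by
    intro C hC
    rcases Finset.mem_insert.mp hC with rfl | hC
    · rw [stepExp, if_pos (longCycle_isGammaCycle hc)]
      simp [stepExp, packSize, longCycle]
    obtain ⟨j, -, rfl⟩ := Finset.mem_image.mp hC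
    simp [stepExp, shortCycle_not_isGammaCycle hc j, subList_shortCycle hc j,
      shortCycle_ne_longCycle hc j, packSize]
  rw [MorderSW, MorderExp, hsel, MorderExpFrom_empty_of_pairwise_meet (ikep c hc) _ hne
    fun C hC D hD => ⟨0, zero_mem_of_isCycle hc (isCycle_of_mem_XList hD),
      zero_mem_of_isCycle hc (isCycle_of_mem_XList hC)⟩,
    XList_graph hc, Finset.sum_map_toList, Finset.length_toList, card_candidates hc,
    Finset.sum_congr rfl hstep, Finset.sum_ite_eq',
    if_pos (longCycle_mem_candidates c)]
  exact div_self (by exact_mod_cast (by omega : c ≠ 0))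

end TightExample

/-- The bound `max {c_int, d*}` on the approximation ratio of
`ℳ_order` is tight: for every integer `c ≥ 2` there is an instance `I` with an
international `Γ`-cycle and `max {c_int(I), d*(I)} = c` on which
`opt(I) = c · SW(ℳ_order(I))` for every pre-selection function `σ`. -/
theorem Morder_approximation_ratio_tight (c : ℕ) (hc : 2 ≤ c) :
    ∃ I : IKEP, (∃ l, IsIntlGammaCycle I l) ∧ max (cInt I) (dStar I) = c ∧
      ∀ σ : PreSelection, (optSize I : ℝ) = (c : ℝ) * MorderSW σ I := by
  refine ⟨TightExample.ikep c hc, ⟨_, TightExample.longCycle_isIntlGammaCycle hc⟩, ?_,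
    fun σ => ?_⟩
  · rw [TightExample.cInt_ikep hc, TightExample.dStar_ikep hc]
    exact max_eq_left (by omega)
  · rw [TightExample.optSize_ikep hc, TightExample.MorderSW_ikep hc σ, mul_one]
end

section
/- Let ℳ'_order be the variant of ℳ_order in which Step 1 instead draws the national packing 𝒞_nat at random according to a fixed probability distribution p* on the set of all maximum national Γ-cycle packings of (G,V) (where p* depends only on (G,V) and the national cycle-limit vector ncl), independently of all other random choices. Then ℳ'_order is individually rational and incentive compatible. -/
open scoped Classical

/-- A family `p*` of probability distributions on the maximum national
`Γ`-cycle packings, depending only on the partitioned graph `(G, 𝒱)` and the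
national cycle-limit vector `ncl`. -/
structure NatPackingDist where
  dist : (n : ℕ) → PartGraph n → (Fin n → ℕ∞) → (Finset (List ℕ) →₀ ℝ)
  nonneg : ∀ n G ncl P, 0 ≤ dist n G ncl P
  sum_one : ∀ n G ncl, ((dist n G ncl).sum fun _ p => p) = 1
  supp : ∀ n G ncl P, dist n G ncl P ≠ 0 → IsMaxNatPacking G ncl P

/-- The expected value of `f` of the packing returned by the variant
`ℳ'_order` of `ℳ_order` whose Step 1 draws the national packing `𝒞_nat` at
random according to `p*`, independently of all other random choices. -/
noncomputable def Morder'Exp (p : NatPackingDist) (I : IKEP)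
    (f : Finset (List ℕ) → ℝ) : ℝ :=
  (p.dist I.n I.G I.prm.ncl).sum fun Cnat q => q * MorderExpFrom I Cnat f

/-- The expected utility `U_i(ℳ'_order(I))` of country `i`. -/
noncomputable def Morder'U (p : NatPackingDist) (I : IKEP) (i : Fin I.n) : ℝ :=
  Morder'Exp p I fun P => (packUtil I.G i P : ℝ)

/-!
Fix the national packing `𝒞_nat` drawn in Step 1. Along every ordering, the expected utility
of country `i` is `u_i(𝒞_nat)` plus, for each greedily selected cycle `C`, the expected utility
of what Step 5 makes of `C`; the greedy selection itself depends only on `icl`, which a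
misreport leaves unchanged.

Individual rationality: a maximum national packing gives `i` at least `nat_i`, since its cycles
inside `V_i` could otherwise be exchanged for a larger national packing of `G[V_i]`.

Incentive compatibility: lowering `iss_i` and `isn_i` keeps fewer cycles, replacing them by
substitutes on subsets of their vertices, and removes substitutes. A removed substitute has a
`V_i`-segment longer than the reported `iss_i`, whereas a remaining one has a single
`V_i`-segment and hence at most `iss_i` vertices in `V_i`; so removal can only lower the average
utility of the substitutes. Averaging over `p*` preserves both inequalities.
-/

open Function

section Averages

variable {α : Type*}

lemma le_list_avg {L : List α} (hL : L ≠ []) {g : α → ℝ} {B : ℝ} (h : ∀ x ∈ L, B ≤ g x) :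
    B ≤ (L.map g).sum / L.length := by
  have hlen : (0 : ℝ) < L.length := by exact_mod_cast List.length_pos_iff.mpr hL
  rw [le_div_iff₀ hlen, mul_comm, ← nsmul_eq_mul, ← L.length_map g]
  exact List.card_nsmul_le_sum _ _ (by simpa using h)

lemma list_avg_le {L : List α} {g : α → ℝ} {B : ℝ} (hB : 0 ≤ B) (h : ∀ x ∈ L, g x ≤ B) :
    (L.map g).sum / L.length ≤ B := by
  rcases eq_or_ne L [] with rfl | hL
  · simpa using hB
  have hlen : (0 : ℝ) < L.length := by exact_mod_cast List.length_pos_iff.mpr hL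
  rw [div_le_iff₀ hlen, mul_comm, ← nsmul_eq_mul, ← L.length_map g]
  exact List.sum_le_card_nsmul _ _ (by simpa using h)

lemma list_avg_mono {L : List α} {g h : α → ℝ} (hgh : ∀ x ∈ L, g x ≤ h x) :
    (L.map g).sum / L.length ≤ (L.map h).sum / L.length :=
  div_le_div_of_nonneg_right (List.sum_le_sum (by simpa using hgh)) (Nat.cast_nonneg _)

lemma list_avg_const_add {L : List α} (hL : L ≠ []) (A : ℝ) (g : α → ℝ) :
    (L.map fun x => A + g x).sum / L.length = A + (L.map g).sum / L.length := by
  have hlen : (L.length : ℝ) ≠ 0 := by exact_mod_cast (List.length_pos_iff.mpr hL).ne'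
  rw [List.sum_map_add, List.map_const', List.sum_replicate, nsmul_eq_mul]
  field_simp

lemma finset_avg_le_of_subset {s t : Finset α} (hst : s ⊆ t) (hs : s.Nonempty) {u : α → ℝ}
    (hdom : ∀ a ∈ s, ∀ b ∈ t \ s, u a ≤ u b) :
    (∑ a ∈ s, u a) / s.card ≤ (∑ a ∈ t, u a) / t.card := by
  have hs0 : (0 : ℝ) < s.card := by exact_mod_cast hs.card_pos
  have ht0 : (0 : ℝ) < t.card := by exact_mod_cast (hs.mono hst).card_pos
  set avg := (∑ a ∈ s, u a) / s.card
  have hsum : ∑ a ∈ s, u a = s.card * avg := (mul_div_cancel₀ _ hs0.ne').symm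
  have hrest : (t \ s).card • avg ≤ ∑ b ∈ t \ s, u b := by
    refine Finset.card_nsmul_le_sum _ _ _ fun b hb => ?_
    rw [div_le_iff₀ hs0, mul_comm, ← nsmul_eq_mul]
    exact Finset.sum_le_card_nsmul _ _ _ fun a ha => hdom a ha b hb
  have hcard : ((t \ s).card : ℝ) + s.card = t.card := by
    exact_mod_cast Finset.card_sdiff_add_card_eq_card hst
  rw [le_div_iff₀ ht0, ← Finset.sum_sdiff hst, ← hcard]
  rw [nsmul_eq_mul] at hrest
  linarith

lemma le_finsupp_sum_mul {w : α →₀ ℝ} (hw : ∀ a, 0 ≤ w a) (hw1 : (w.sum fun _ q => q) = 1)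
    {g : α → ℝ} {B : ℝ} (h : ∀ a ∈ w.support, B ≤ g a) :
    B ≤ w.sum fun a q => q * g a :=
  calc B = w.sum fun _ q => q * B := by rw [← Finsupp.sum_mul, hw1, one_mul]
    _ ≤ _ := Finset.sum_le_sum fun a ha => mul_le_mul_of_nonneg_left (h a ha) (hw a)

lemma finsupp_sum_mul_mono {w : α →₀ ℝ} (hw : ∀ a, 0 ≤ w a) {g h : α → ℝ}
    (hgh : ∀ a ∈ w.support, g a ≤ h a) :
    (w.sum fun a q => q * g a) ≤ w.sum fun a q => q * h a :=
  Finset.sum_le_sum fun a ha => mul_le_mul_of_nonneg_left (hgh a ha) (hw a)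

end Averages

section PeriodicRuns

variable {p : ℕ → Prop} {L : ℕ}

/-- `k + L - 1` is the cyclic predecessor of `k`, written so as not to truncate at `k = 0`. -/
def IsRunStart (p : ℕ → Prop) (L k : ℕ) : Prop := p k ∧ ¬ p (k + L - 1)

lemma Function.Periodic.isRunStart (hp : Periodic p L) : Periodic (IsRunStart p L) L := by
  intro k
  simp only [IsRunStart, show k + L + L - 1 = k + L - 1 + L by omega, hp k, hp (k + L - 1)]

lemma Function.Periodic.isRunStart_succ (hp : Periodic p L) {x : ℕ} (h : p (x + 1)) (h' : ¬ p x) :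
    IsRunStart p L (x + 1) :=
  ⟨h, by rwa [show x + 1 + L - 1 = x + L by omega, hp]⟩

lemma Function.Periodic.not_of_forall_not_isRunStart (hp : Periodic p L) (hL : 0 < L)
    (hno : ∀ k < L, ¬ IsRunStart p L k) {m₀ : ℕ} (h₀ : ¬ p m₀) (m : ℕ) : ¬ p m := by
  have hfwd : ∀ d, ¬ p (m₀ + d) := by
    intro d
    induction d with
    | zero => exact h₀
    | succ d ih =>
      intro hd
      apply hno _ (Nat.mod_lt (m₀ + d + 1) hL)
      rw [hp.isRunStart.map_mod_nat]
      exact hp.isRunStart_succ hd ih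
  have hm₀ : m₀ ≤ m₀ * L := Nat.le_mul_of_pos_right m₀ hL
  have hshift : p (m + m₀ * L) = p m := by simpa using hp.nat_mul m₀ m
  rw [← hshift, show m + m₀ * L = m₀ + (m + m₀ * L - m₀) by omega]
  exact hfwd _

/-- Walking backwards from `k₀ + t`, one stays inside `p` until a run start is met. -/
lemma Function.Periodic.run_of_unique_isRunStart (hp : Periodic p L) {k₀ : ℕ} (hk₀ : k₀ < L)
    (huniq : ∀ k < L, IsRunStart p L k → k = k₀) {t : ℕ} (ht : t < L) (hpt : p (k₀ + t)) :
    ∀ j ≤ t, p (k₀ + j) := by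
  have hback : ∀ d ≤ t, p (k₀ + (t - d)) := by
    intro d
    induction d with
    | zero => simpa using hpt
    | succ d ih =>
      intro hd
      by_contra hnot
      have hnext : p (k₀ + (t - (d + 1)) + 1) := by
        rw [show k₀ + (t - (d + 1)) + 1 = k₀ + (t - d) by omega]
        exact ih (by omega)
      have hstart := hp.isRunStart_succ hnext hnot
      rw [← hp.isRunStart.map_mod_nat] at hstart
      have hk : (k₀ + (t - d)) % L = k₀ % L := by
        rw [show k₀ + (t - d) = k₀ + (t - (d + 1)) + 1 by omega,
          huniq _ (Nat.mod_lt _ (by omega)) hstart, Nat.mod_eq_of_lt hk₀]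
      have hzero : (t - d) % L = 0 % L := Nat.ModEq.add_left_cancel' k₀ hk
      rw [Nat.mod_eq_of_lt (by omega), Nat.zero_mod] at hzero
      omega
  intro j hj
  simpa [Nat.sub_sub_self hj] using hback (t - j) (by omega)

lemma Function.Periodic.card_run_le [DecidablePred p] (hp : Periodic p L) (hL : 0 < L) (k : ℕ) :
    ((Finset.range L).filter fun j => ∀ j' ≤ j, p (k + j')).card ≤
      ((Finset.range L).filter p).card := by
  apply Finset.card_le_card_of_injOn (fun j => (k + j) % L)
  · intro j hj
    simp only [Finset.coe_filter, Finset.mem_range, Set.mem_ofPred_eq] at hj ⊢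
    exact ⟨Nat.mod_lt _ hL, by rw [hp.map_mod_nat]; exact hj.2 j le_rfl⟩
  · intro a ha b hb hab
    simp only [Finset.coe_filter, Finset.mem_range, Set.mem_ofPred_eq] at ha hb
    have := Nat.ModEq.add_left_cancel' k hab
    rwa [Nat.ModEq, Nat.mod_eq_of_lt ha.1, Nat.mod_eq_of_lt hb.1] at this

lemma Function.Periodic.card_le_run_of_unique_isRunStart [DecidablePred p] (hp : Periodic p L)
    {k₀ : ℕ} (hk₀ : k₀ < L) (huniq : ∀ k < L, IsRunStart p L k → k = k₀) :
    ((Finset.range L).filter p).card ≤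
      ((Finset.range L).filter fun j => ∀ j' ≤ j, p (k₀ + j')).card := by
  have hL : 0 < L := by omega
  have hsub : (Finset.range L).filter p ⊆
      ((Finset.range L).filter fun j => ∀ j' ≤ j, p (k₀ + j')).image fun j => (k₀ + j) % L := by
    intro m hm
    simp only [Finset.mem_filter, Finset.mem_range] at hm
    have hback : (k₀ + (m + L - k₀) % L) % L = m := by
      rw [Nat.add_mod_mod, show k₀ + (m + L - k₀) = m + L by omega, Nat.add_mod_right,
        Nat.mod_eq_of_lt hm.1]
    refine Finset.mem_image.mpr ⟨(m + L - k₀) % L, ?_, hback⟩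
    have ht := Nat.mod_lt (m + L - k₀) hL
    simp only [Finset.mem_filter, Finset.mem_range]
    refine ⟨ht, hp.run_of_unique_isRunStart hk₀ huniq ht ?_⟩
    rw [← hp.map_mod_nat, hback]
    exact hm.2
  exact (Finset.card_le_card hsub).trans Finset.card_image_le

end PeriodicRuns

section Segments

variable {n : ℕ} {G : PartGraph n} {l : List ℕ} {i : Fin n}

lemma periodic_country_cyc (G : PartGraph n) (l : List ℕ) (i : Fin n) :
    Periodic (fun m => G.country (cyc l m) = i) l.length := by
  intro m
  simp only [cyc, Nat.add_mod_right]

lemma cycUtil_eq_card (G : PartGraph n) (i : Fin n) (l : List ℕ) :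
    cycUtil G i l =
      ((Finset.range l.length).filter fun m => G.country (cyc l m) = i).card := by
  have hl : (List.range l.length).map (fun m => cyc l m) = l := by
    refine List.ext_getElem (by simp) fun m h₁ h₂ => ?_
    simp [cyc, Nat.mod_eq_of_lt h₂, List.getElem?_eq_getElem h₂]
  conv_lhs => rw [cycUtil, ← hl]
  rw [List.filter_map, List.length_map]
  rfl

lemma runLen_le_cycUtil (hl : l ≠ []) (k : ℕ) : runLen G l i k ≤ cycUtil G i l := by
  rw [cycUtil_eq_card]
  exact (periodic_country_cyc G l i).card_run_le (List.length_pos_iff.mpr hl) k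

/-- With at most one `V_i`-segment, all of `V_i ∩ l` lies in that segment (or is empty, `l`
being international). -/
lemma cycUtil_le_of_numSegs_le_one {m : ℕ∞} (hl : l ≠ []) (hint : IsInternational G l)
    (hsegs : numSegs G l i ≤ 1)
    (hrun : ∀ k < l.length, segStart G l i k → (runLen G l i k : ℕ∞) ≤ m) :
    (cycUtil G i l : ℕ∞) ≤ m := by
  have hp := periodic_country_cyc G l i
  by_cases hex : ∃ k < l.length, segStart G l i k
  · obtain ⟨k₀, hk₀, hs⟩ := hex
    have huniq : ∀ k < l.length, segStart G l i k → k = k₀ := fun k hk hsk =>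
      Finset.card_le_one.mp hsegs _ (by simpa using ⟨hk, hsk⟩) _ (by simpa using ⟨hk₀, hs⟩)
    calc (cycUtil G i l : ℕ∞) ≤ runLen G l i k₀ := by
          rw [cycUtil_eq_card]
          exact_mod_cast hp.card_le_run_of_unique_isRunStart hk₀ huniq
      _ ≤ m := hrun k₀ hk₀ hs
  · push Not at hex
    obtain ⟨v, hv, hvi⟩ : ∃ v ∈ l, G.country v ≠ i := by
      simpa [IsNationalTo] using fun h => hint ⟨i, h⟩
    obtain ⟨j, hj, rfl⟩ := List.mem_iff_getElem.mp hv
    have hj' : ¬ G.country (cyc l j) = i := by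
      simpa [cyc, Nat.mod_eq_of_lt hj, List.getElem?_eq_getElem hj] using hvi
    have hzero : cycUtil G i l = 0 := by
      rw [cycUtil_eq_card, Finset.card_eq_zero, Finset.filter_eq_empty_iff]
      exact fun k _ => hp.not_of_forall_not_isRunStart (List.length_pos_iff.mpr hl) hex hj' k
    simp [hzero]

end Segments

section Misreport

variable {n : ℕ} {G : PartGraph n} {i : Fin n} {Γ' Γ : Params n} {l C D : List ℕ}

lemma ParamLE.iss_le (hle : ParamLE i Γ' Γ) (h : Fin n) : Γ'.iss h ≤ Γ.iss h := by
  obtain ⟨-, -, hiss, -, hother, -⟩ := hle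
  rcases eq_or_ne h i with rfl | hh
  exacts [hiss, (hother h hh).le]

lemma ParamLE.isn_le (hle : ParamLE i Γ' Γ) (h : Fin n) : Γ'.isn h ≤ Γ.isn h := by
  obtain ⟨-, -, -, hisn, -, hother⟩ := hle
  rcases eq_or_ne h i with rfl | hh
  exacts [hisn, (hother h hh).le]

lemma isGammaCycle_iff_of_isInternational (hint : IsInternational G l) :
    IsGammaCycle G Γ l ↔ IsCycle G l ∧ (l.length : ℕ∞) ≤ Γ.icl ∧
      (∀ h, ∀ k < l.length, segStart G l h k → (runLen G l h k : ℕ∞) ≤ Γ.iss h) ∧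
      ∀ h, (numSegs G l h : ℕ∞) ≤ Γ.isn h := by
  constructor
  · rintro ⟨hc, ⟨j, hj, -⟩ | ⟨-, hrest⟩⟩
    · exact absurd ⟨j, hj⟩ hint
    · exact ⟨hc, hrest⟩
  · rintro ⟨hc, hrest⟩
    exact ⟨hc, Or.inr ⟨hint, hrest⟩⟩

lemma IsGammaCycle.of_paramLE (hle : ParamLE i Γ' Γ) (h : IsGammaCycle G Γ' l) :
    IsGammaCycle G Γ l := by
  obtain ⟨hc, ⟨j, hj, hlen⟩ | ⟨hint, hlen, hiss, hisn⟩⟩ := h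
  · exact ⟨hc, Or.inl ⟨j, hj, hle.2.1 ▸ hlen⟩⟩
  · exact ⟨hc, Or.inr ⟨hint, hle.1 ▸ hlen, fun h k hk hs => (hiss h k hk hs).trans (hle.iss_le h),
      fun h => (hisn h).trans (hle.isn_le h)⟩⟩

lemma SubCond.of_paramLE (hle : ParamLE i Γ' Γ) (h : SubCond G Γ' C D) : SubCond G Γ C D :=
  ⟨h.1.of_paramLE hle, h.2⟩

lemma mem_subList : D ∈ subList G Γ C ↔ SubCond G Γ C D := by
  rw [subList, Finset.mem_toList, Set.Finite.mem_toFinset, Set.mem_ofPred_eq]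

lemma SubCond.ne_nil (h : SubCond G Γ C D) : D ≠ [] := by
  rintro rfl
  simpa using h.1.1.1

lemma cycUtil_le_of_subset (hD : D.Nodup) (hDC : D ⊆ C) : cycUtil G i D ≤ cycUtil G i C :=
  ((hD.subperm hDC).filter _).length_le

lemma SubCond.cycUtil_le_iss (h : SubCond G Γ C D) : (cycUtil G i D : ℕ∞) ≤ Γ.iss i := by
  have hint := h.2.1
  exact cycUtil_le_of_numSegs_le_one h.ne_nil hint (h.2.2.2.1 i)
    (((isGammaCycle_iff_of_isInternational hint).mp h.1).2.2.1 i)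

/-- The misreport of `i` affects no condition on a substitute except the size of its
`V_i`-segments. -/
lemma SubCond.exists_long_segment (hle : ParamLE i Γ' Γ) (hD : SubCond G Γ C D)
    (hD' : ¬ SubCond G Γ' C D) :
    ∃ k < D.length, segStart G D i k ∧ Γ'.iss i < runLen G D i k := by
  obtain ⟨hg, hint, hDC, hsegs, hcanon⟩ := hD
  obtain ⟨hc, hlen, hiss, hisn⟩ := (isGammaCycle_iff_of_isInternational hint).mp hg
  obtain ⟨hicl, -, -, -, hiss', hisn'⟩ := hle
  by_contra! hshort
  refine hD' ⟨(isGammaCycle_iff_of_isInternational hint).mpr ⟨hc, hicl ▸ hlen, ?_, ?_⟩,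
    hint, hDC, hsegs, hcanon⟩
  · intro h k hk hs
    rcases eq_or_ne h i with rfl | hh
    · exact hshort k hk hs
    · exact hiss' h hh ▸ hiss h k hk hs
  · intro h
    rcases eq_or_ne h i with rfl | hh
    · exact (Nat.cast_le.mpr (hsegs h)).trans (Γ'.isn_pos h)
    · exact hisn' h hh ▸ hisn h

end Misreport

/-- Expected utility of `i` from a uniformly random substitute for `C`; when `C` has no
substitute this is `0 / 0 = 0`, matching the deletion of `C` in Step 5. -/
noncomputable def substAvgUtil {n : ℕ} (G : PartGraph n) (Γ : Params n) (i : Fin n)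
    (C : List ℕ) : ℝ :=
  ((subList G Γ C).map fun D => (cycUtil G i D : ℝ)).sum / (subList G Γ C).length

/-- Expected utility of `i` from what Step 5 makes of the greedily selected cycle `C`. -/
noncomputable def replacementUtil {n : ℕ} (G : PartGraph n) (Γ : Params n) (i : Fin n)
    (C : List ℕ) : ℝ :=
  if IsGammaCycle G Γ C then (cycUtil G i C : ℝ) else substAvgUtil G Γ i C

section Replacement

variable {n : ℕ} {G : PartGraph n} {i : Fin n} {Γ' Γ : Params n} {C : List ℕ}

lemma substAvgUtil_nonneg : 0 ≤ substAvgUtil G Γ i C :=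
  div_nonneg (List.sum_nonneg (by simp)) (Nat.cast_nonneg _)

lemma substAvgUtil_le_cycUtil : substAvgUtil G Γ i C ≤ cycUtil G i C :=
  list_avg_le (Nat.cast_nonneg _) fun _ hD =>
    have hD := mem_subList.mp hD
    Nat.cast_le.mpr (cycUtil_le_of_subset hD.1.1.2.1 hD.2.2.1)

lemma substAvgUtil_eq_finset_avg (G : PartGraph n) (Γ : Params n) (i : Fin n) (C : List ℕ) :
    substAvgUtil G Γ i C = (∑ D ∈ (SubCond_finite G Γ C).toFinset, (cycUtil G i D : ℝ)) /
      (SubCond_finite G Γ C).toFinset.card := by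
  rw [substAvgUtil, subList, Finset.sum_map_toList, Finset.length_toList]

/-- The misreport only discards substitutes, and those it discards are worth more to `i` than
those it keeps. -/
lemma substAvgUtil_mono (hle : ParamLE i Γ' Γ) : substAvgUtil G Γ' i C ≤ substAvgUtil G Γ i C := by
  rcases (SubCond_finite G Γ' C).toFinset.eq_empty_or_nonempty with h | hne
  · rw [substAvgUtil_eq_finset_avg, h]
    simpa using substAvgUtil_nonneg
  rw [substAvgUtil_eq_finset_avg, substAvgUtil_eq_finset_avg]
  refine finset_avg_le_of_subset (fun D hD => ?_) hne fun D hD D' hD' => ?_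
  · simp only [Set.Finite.mem_toFinset] at hD ⊢
    exact hD.of_paramLE hle
  · simp only [Finset.mem_sdiff, Set.Finite.mem_toFinset] at hD hD'
    obtain ⟨k, -, -, hlong⟩ := hD'.1.exists_long_segment hle hD'.2
    have hrun := runLen_le_cycUtil (G := G) (i := i) hD'.1.ne_nil k
    have : (cycUtil G i D : ℕ∞) ≤ cycUtil G i D' :=
      hD.cycUtil_le_iss.trans (hlong.trans_le (by exact_mod_cast hrun)).le
    exact_mod_cast this

lemma replacementUtil_nonneg : 0 ≤ replacementUtil G Γ i C := by
  unfold replacementUtil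
  split_ifs
  exacts [Nat.cast_nonneg _, substAvgUtil_nonneg]

lemma replacementUtil_mono (hle : ParamLE i Γ' Γ) :
    replacementUtil G Γ' i C ≤ replacementUtil G Γ i C := by
  unfold replacementUtil
  by_cases h' : IsGammaCycle G Γ' C
  · rw [if_pos h', if_pos (h'.of_paramLE hle)]
  rw [if_neg h']
  split_ifs
  exacts [substAvgUtil_le_cycUtil, substAvgUtil_mono hle]

end Replacement

section Greedy

lemma pairwise_disjoint_greedy :
    ∀ (acc ord : List (List ℕ)), acc.Pairwise List.Disjoint →
      (greedy acc ord).Pairwise List.Disjoint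
  | _, [], hacc => hacc
  | acc, c :: rest, hacc => by
    rw [greedy]
    split_ifs with hc
    · exact pairwise_disjoint_greedy _ rest (List.pairwise_cons.mpr ⟨fun a ha => hc a ha, hacc⟩)
    · exact pairwise_disjoint_greedy acc rest hacc

lemma greedy_subset : ∀ (acc ord : List (List ℕ)), greedy acc ord ⊆ acc ++ ord
  | _, [] => by simp [greedy]
  | acc, c :: rest => by
    rw [greedy]
    split_ifs
    · exact List.Subset.trans (greedy_subset _ rest) (by simp [List.subset_def]; tauto)
    · exact List.Subset.trans (greedy_subset acc rest) (by simp [List.subset_def]; tauto)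

end Greedy

section Decomposition

variable {n : ℕ} {G : PartGraph n} {Γ : Params n} {i : Fin n}

/-- Disjointness makes every insertion into `acc` add a new element. -/
lemma stepExp_packUtil_eq : ∀ (rest : List (List ℕ)) (acc : Finset (List ℕ)),
    rest.Pairwise List.Disjoint → (∀ C ∈ rest, ∀ a ∈ acc, C.Disjoint a) →
    (∀ C ∈ rest, C ≠ []) →
    stepExp G Γ (fun P => (packUtil G i P : ℝ)) rest acc =
      packUtil G i acc + (rest.map (replacementUtil G Γ i)).sum
  | [], acc, _, _, _ => by simp [stepExp]
  | C :: rest, acc, hpw, hacc, hne => by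
    obtain ⟨hC, hpw⟩ := List.pairwise_cons.mp hpw
    have hacc' : ∀ C' ∈ rest, ∀ a ∈ acc, C'.Disjoint a :=
      fun C' hC' => hacc C' (List.mem_cons_of_mem _ hC')
    have hne' : ∀ C' ∈ rest, C' ≠ [] := fun C' hC' => hne C' (List.mem_cons_of_mem _ hC')
    have hins : ∀ D, D ≠ [] → D ⊆ C →
        stepExp G Γ (fun P => (packUtil G i P : ℝ)) rest (insert D acc) =
          packUtil G i acc + (rest.map (replacementUtil G Γ i)).sum + cycUtil G i D := by
      intro D hD hDC
      have hDacc : D ∉ acc := fun hmem => by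
        obtain ⟨v, hv⟩ := List.exists_mem_of_ne_nil D hD
        exact hacc C List.mem_cons_self D hmem (hDC hv) hv
      have hdisj : ∀ C' ∈ rest, ∀ a ∈ insert D acc, C'.Disjoint a := by
        intro C' hC' a ha
        rcases Finset.mem_insert.mp ha with rfl | ha
        · exact List.disjoint_of_subset_right hDC (hC C' hC').symm
        · exact hacc' C' hC' a ha
      rw [stepExp_packUtil_eq rest _ hpw hdisj hne', packUtil, Finset.sum_insert hDacc,
        ← packUtil]
      push_cast
      ring
    rw [stepExp, List.map_cons, List.sum_cons, replacementUtil]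
    split_ifs with hΓ hsub
    · rw [hins C (hne C List.mem_cons_self) (List.Subset.refl C)]
      ring
    · rw [List.map_congr_left fun D hD =>
          hins D (mem_subList.mp hD).ne_nil (mem_subList.mp hD).2.2.1,
        list_avg_const_add hsub, substAvgUtil]
      ring
    · rw [stepExp_packUtil_eq rest acc hpw hacc' hne', substAvgUtil, not_not.mp hsub]
      simp

end Decomposition

section OrderMechanism

variable {n : ℕ} {G : PartGraph n} {icl : ℕ∞} {avail : Finset ℕ}

lemma xCond_of_mem_permutations {ord : List (List ℕ)}
    (hord : ord ∈ (XList G icl avail).permutations) : ∀ c ∈ ord, XCond G icl avail c := by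
  intro c hc
  have hc := (List.mem_permutations.mp hord).subset hc
  rwa [XList, Finset.mem_toList, Set.Finite.mem_toFinset] at hc

lemma stepExp_greedy_eq (Γ : Params n) (i : Fin n) {Cnat : Finset (List ℕ)}
    {ord : List (List ℕ)} (hord : ∀ c ∈ ord, XCond G icl (G.verts \ Cnat.biUnion List.toFinset) c) :
    stepExp G Γ (fun P => (packUtil G i P : ℝ)) (greedy [] ord) Cnat =
      packUtil G i Cnat + ((greedy [] ord).map (replacementUtil G Γ i)).sum := by
  have hsel : ∀ c ∈ greedy [] ord, XCond G icl (G.verts \ Cnat.biUnion List.toFinset) c :=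
    fun c hc => hord c (by simpa using greedy_subset [] ord hc)
  refine stepExp_packUtil_eq _ _ (pairwise_disjoint_greedy [] ord List.Pairwise.nil)
    (fun c hc a ha v hvc hva => ?_) fun c hc => ?_
  · have hv := (hsel c hc).2.1 v hvc
    simp only [Finset.mem_sdiff, Finset.mem_biUnion, List.mem_toFinset] at hv
    exact hv.2 ⟨a, ha, hva⟩
  · rintro rfl
    simpa using (hsel _ hc).1.1

lemma packUtil_le_morderExpFrom (I : IKEP) (i : Fin I.n) (Cnat : Finset (List ℕ)) :
    (packUtil I.G i Cnat : ℝ) ≤ MorderExpFrom I Cnat fun P => (packUtil I.G i P : ℝ) := by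
  refine le_list_avg (List.ne_nil_of_mem (List.mem_permutations.mpr (List.Perm.refl _)))
    fun ord hord => ?_
  rw [stepExp_greedy_eq I.prm i (xCond_of_mem_permutations hord), le_add_iff_nonneg_right]
  exact List.sum_nonneg (by simpa using fun _ _ => replacementUtil_nonneg)

lemma morderExpFrom_mono (I : IKEP) {i : Fin I.n} {Γ' : Params I.n} (hle : ParamLE i Γ' I.prm)
    (Cnat : Finset (List ℕ)) :
    MorderExpFrom { I with prm := Γ' } Cnat (fun P => (packUtil I.G i P : ℝ)) ≤
      MorderExpFrom I Cnat fun P => (packUtil I.G i P : ℝ) := by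
  simp only [MorderExpFrom, hle.1]
  refine list_avg_mono fun ord hord => ?_
  rw [stepExp_greedy_eq Γ' i (xCond_of_mem_permutations hord),
    stepExp_greedy_eq I.prm i (xCond_of_mem_permutations hord)]
  gcongr
  exact List.sum_le_sum (by simpa using fun _ _ => replacementUtil_mono hle)

end OrderMechanism

section NationalPackings

variable {n : ℕ} {G : PartGraph n} {ncl : Fin n → ℕ∞} {i : Fin n} {P Q : Finset (List ℕ)}

lemma packUtil_eq_packSize (hP : ∀ l ∈ P, IsNationalTo G l i) : packUtil G i P = packSize P :=
  Finset.sum_congr rfl fun l hl => by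
    rw [cycUtil, List.filter_eq_self.mpr fun v hv => by simpa using hP l hl v hv]

lemma IsNatPacking.subset (hQ : IsNatPacking G ncl Q) (hPQ : P ⊆ Q) : IsNatPacking G ncl P :=
  ⟨⟨fun l hl => hQ.1.1 l (hPQ hl), fun l hl l' hl' => hQ.1.2 l (hPQ hl) l' (hPQ hl')⟩,
    fun l hl => hQ.2 l (hPQ hl)⟩

/-- A cycle national to `i` and one national to another country share no vertex. -/
lemma IsNatPacking.union (hP : IsNatPacking G ncl P) (hPi : ∀ l ∈ P, IsNationalTo G l i)
    (hQ : IsNatPacking G ncl Q) (hQi : ∀ l ∈ Q, ¬ IsNationalTo G l i) :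
    IsNatPacking G ncl (P ∪ Q) := by
  have hcross : ∀ l ∈ P, ∀ l' ∈ Q, ∀ v ∈ l, v ∉ l' := by
    intro l hl l' hl' v hv hv'
    obtain ⟨j, hj, -⟩ := hQ.2 l' hl'
    obtain rfl : j = i := (hj v hv').symm.trans (hPi l hl v hv)
    exact hQi l' hl' hj
  refine ⟨⟨fun l hl => ?_, fun l hl l' hl' hne => ?_⟩, fun l hl => ?_⟩
  · rcases Finset.mem_union.mp hl with hl | hl
    exacts [hP.1.1 l hl, hQ.1.1 l hl]
  · rcases Finset.mem_union.mp hl with hl | hl <;> rcases Finset.mem_union.mp hl' with hl' | hl'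
    · exact hP.1.2 l hl l' hl' hne
    · exact hcross l hl l' hl'
    · exact fun v hv hv' => hcross l' hl' l hl v hv' hv
    · exact hQ.1.2 l hl l' hl' hne
  · rcases Finset.mem_union.mp hl with hl | hl
    exacts [hP.2 l hl, hQ.2 l hl]

/-- Exchanging the cycles of a maximum national packing inside `V_i` for any national packing
of `G[V_i]` yields a national packing, so the former are at least as large. -/
lemma natSize_le_packUtil (I : IKEP) (i : Fin I.n) {Cnat : Finset (List ℕ)}
    (hmax : IsMaxNatPacking I.G I.prm.ncl Cnat) : natSize I i ≤ packUtil I.G i Cnat := by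
  refine csSup_le ⟨0, ∅, by simp [IsPacking], by simp, by simp, rfl⟩ ?_
  rintro _ ⟨P, hP, hPi, hPlen, rfl⟩
  set A := Cnat.filter fun l => IsNationalTo I.G l i
  set B := Cnat.filter fun l => ¬ IsNationalTo I.G l i
  have hBi : ∀ l ∈ B, ¬ IsNationalTo I.G l i := fun l hl => (Finset.mem_filter.mp hl).2
  have hPB : Disjoint P B :=
    Finset.disjoint_left.mpr fun l hlP hlB => hBi l hlB (hPi l hlP)
  have hPnat : IsNatPacking I.G I.prm.ncl P := ⟨hP, fun l hl => ⟨i, hPi l hl, hPlen l hl⟩⟩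
  have hexchange := hmax.2 (P ∪ B)
    (hPnat.union hPi (hmax.1.subset (Finset.filter_subset _ _)) hBi)
  have hunion : packSize (P ∪ B) = packSize P + packSize B := Finset.sum_union hPB
  have hsplit : packSize Cnat = packSize A + packSize B :=
    (Finset.sum_filter_add_sum_filter_not _ _ _).symm
  calc packSize P ≤ packSize A := by omega
    _ = packUtil I.G i A := (packUtil_eq_packSize fun l hl => (Finset.mem_filter.mp hl).2).symm
    _ ≤ packUtil I.G i Cnat := Finset.sum_le_sum_of_subset (Finset.filter_subset _ _)

end NationalPackings

/-- The variant `ℳ'_order` of `ℳ_order`, in which Step 1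
instead draws the maximum national `Γ`-cycle packing at random according to a
fixed distribution `p*` (depending only on `(G, 𝒱)` and `ncl`), is
individually rational and incentive compatible. -/
theorem Morder'_IR_and_IC (p : NatPackingDist) :
    (∀ I : IKEP, ∀ i : Fin I.n, (natSize I i : ℝ) ≤ Morder'U p I i) ∧
      (∀ I : IKEP, ∀ i : Fin I.n, ∀ Γ' : Params I.n, ParamLE i Γ' I.prm →
        Morder'U p { I with prm := Γ' } i ≤ Morder'U p I i) := by
  refine ⟨fun I i => ?_, fun I i Γ' hle => ?_⟩
  · refine le_finsupp_sum_mul (p.nonneg _ _ _) (p.sum_one _ _ _) fun Cnat hCnat => ?_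
    have hmax := p.supp _ _ _ _ (Finsupp.mem_support_iff.mp hCnat)
    exact (Nat.cast_le.mpr (natSize_le_packUtil I i hmax)).trans
      (packUtil_le_morderExpFrom I i Cnat)
  · have hncl : Γ'.ncl = I.prm.ncl := hle.2.1
    simp only [Morder'U, Morder'Exp, hncl]
    exact finsupp_sum_mul_mono (p.nonneg _ _ _) fun Cnat _ => morderExpFrom_mono I hle Cnat
end

section
/- There exists no mechanism that is both near-perfect and incentive compatible: for every (randomised) mechanism ℳ, if for every IKEP instance I whose compatibility graph admits a Γ-cycle packing covering all but at most one vertex the distribution ℳ(I) returns, with probability 1, a Γ-cycle packing covering all but at most one vertex, then ℳ is not incentive compatible. -/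
open scoped Classical

/-- The set of vertices of `G` covered by none of the cycles of `P`. -/
noncomputable def uncovered (I : IKEP) (P : Finset (List ℕ)) : Finset ℕ :=
  I.G.verts.filter fun v => ∀ l ∈ P, v ∉ l

/-- A near-perfect mechanism: on every instance admitting a `Γ`-cycle packing
covering all but at most one vertex, it returns (with probability 1) a
`Γ`-cycle packing covering all but at most one vertex. -/
def NearPerfectMech (M : Mechanism) : Prop :=
  ∀ I : IKEP, (∃ P, IsGammaPacking I P ∧ (uncovered I P).card ≤ 1) →
    ∀ P, M.dist I P ≠ 0 → (uncovered I P).card ≤ 1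

/-! The counterexample is a seven-vertex graph with countries `V₀ = {1, 2, 3, 4}` and
`V₁ = {5, 6, 7}` and no national cycles allowed. The graph is bipartite, so every packing covers
at most six of its seven vertices and the two utilities always sum to at most `6`.
If country `0` declares at most one `V₀`-segment per cycle, no cycle passes through `7`
(it would run `6 → 1 → 7 → 3`), so a near-perfect packing misses exactly `7` and country `0`
gets `4`. If country `1` declares `V₁`-segments of size one, a near-perfect packing must
miss `4`, and country `1` gets `3`. Under truthful reports, incentive compatibility would then
give the two countries at least `4 + 3 > 6`. -/

namespace List

variable {l : List ℕ} {v w : ℕ}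

theorem next_eq_of_prev_eq (hl : l.Nodup) (hv : v ∈ l) (hw : w ∈ l) (h : l.prev w hw = v) :
    l.next v hv = w := by
  subst h
  exact l.next_prev hl w hw

theorem prev_eq_of_next_eq (hl : l.Nodup) (hv : v ∈ l) (hw : w ∈ l) (h : l.next v hv = w) :
    l.prev w hw = v := by
  subst h
  exact l.prev_next hl v hv

end List

section Cyc

variable {l : List ℕ} {v : ℕ}

theorem cyc_idxOf (hv : v ∈ l) : cyc l (l.idxOf v) = v := by
  have hlt := List.idxOf_lt_length_of_mem hv
  rw [cyc, Nat.mod_eq_of_lt hlt, List.getD_eq_getElem _ _ hlt, List.getElem_idxOf]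

theorem cyc_idxOf_add_one (hv : v ∈ l) : cyc l (l.idxOf v + 1) = l.next v hv := by
  rw [cyc, List.next_eq_getElem, List.getD_eq_getElem]

theorem cyc_idxOf_add_length_sub_one (hv : v ∈ l) :
    cyc l (l.idxOf v + l.length - 1) = l.prev v hv := by
  have hlt := List.idxOf_lt_length_of_mem hv
  rw [cyc, List.prev_eq_getElem, Nat.add_sub_assoc (by omega : 1 ≤ l.length),
    List.getD_eq_getElem]

end Cyc

namespace IsCycle

variable {n : ℕ} {G : PartGraph n} {l : List ℕ} {v : ℕ}

theorem arc_next (hc : IsCycle G l) (hv : v ∈ l) : (v, l.next v hv) ∈ G.arcs := by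
  have h := hc.2.2.2 (l.idxOf v) (List.idxOf_lt_length_of_mem hv)
  rwa [cyc_idxOf hv, cyc_idxOf_add_one hv] at h

theorem arc_prev (hc : IsCycle G l) (hv : v ∈ l) : (l.prev v hv, v) ∈ G.arcs := by
  have h := hc.arc_next (l.prev_mem v hv)
  rwa [l.next_prev hc.2.1] at h

theorem even_length (χ : ℕ → ZMod 2) (hχ : ∀ p ∈ G.arcs, χ p.2 = χ p.1 + 1)
    (hc : IsCycle G l) : Even l.length := by
  have hstep (k : ℕ) (hk : k ≤ l.length) : χ (cyc l k) = χ (cyc l 0) + k := by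
    induction k with
    | zero => simp
    | succ k ih =>
      rw [hχ _ (hc.2.2.2 k hk), ih (by omega)]
      push_cast
      ring
  have hwrap : cyc l l.length = cyc l 0 := by simp [cyc]
  have h := hstep l.length le_rfl
  rw [hwrap, left_eq_add] at h
  exact ZMod.natCast_eq_zero_iff_even.mp h

end IsCycle

section Segments

variable {n : ℕ} {G : PartGraph n} {l : List ℕ} {i : Fin n} {v w : ℕ}

theorem segStart_idxOf (hv : v ∈ l) (hvi : G.country v = i)
    (hprev : G.country (l.prev v hv) ≠ i) : segStart G l i (l.idxOf v) :=
  ⟨by rwa [cyc_idxOf hv], by rwa [cyc_idxOf_add_length_sub_one hv]⟩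

theorem two_le_numSegs (hv : v ∈ l) (hw : w ∈ l) (hvw : v ≠ w)
    (hsv : segStart G l i (l.idxOf v)) (hsw : segStart G l i (l.idxOf w)) :
    2 ≤ numSegs G l i := by
  have hne : l.idxOf v ≠ l.idxOf w := fun h => hvw (by rw [← cyc_idxOf hv, h, cyc_idxOf hw])
  have hsub : ({l.idxOf v, l.idxOf w} : Finset ℕ) ⊆
      (Finset.range l.length).filter fun k => segStart G l i k := by
    simp only [Finset.insert_subset_iff, Finset.singleton_subset_iff, Finset.mem_filter,
      Finset.mem_range]
    exact ⟨⟨List.idxOf_lt_length_of_mem hv, hsv⟩, ⟨List.idxOf_lt_length_of_mem hw, hsw⟩⟩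
  calc 2 = ({l.idxOf v, l.idxOf w} : Finset ℕ).card := (Finset.card_pair hne).symm
    _ ≤ numSegs G l i := Finset.card_le_card hsub

theorem two_le_runLen (hl : 2 ≤ l.length) (hv : v ∈ l) (hvi : G.country v = i)
    (hnext : G.country (l.next v hv) = i) : 2 ≤ runLen G l i (l.idxOf v) := by
  have hrun : ∀ j ≤ 1, G.country (cyc l (l.idxOf v + j)) = i := by
    intro j hj
    interval_cases j
    · rwa [Nat.add_zero, cyc_idxOf hv]
    · rwa [cyc_idxOf_add_one hv]
  have hsub : ({0, 1} : Finset ℕ) ⊆ (Finset.range l.length).filter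
      fun j => ∀ j' ≤ j, G.country (cyc l (l.idxOf v + j')) = i := by
    simp only [Finset.insert_subset_iff, Finset.singleton_subset_iff, Finset.mem_filter,
      Finset.mem_range]
    exact ⟨⟨by omega, fun j hj => hrun j (by omega)⟩, ⟨by omega, hrun⟩⟩
  exact Finset.card_le_card hsub

end Segments

namespace IsGammaCycle

variable {n : ℕ} {G : PartGraph n} {Γ : Params n} {l : List ℕ}

theorem intl_of_ncl_eq_zero (hg : IsGammaCycle G Γ l) (hncl : Γ.ncl = 0) :
    IsInternational G l ∧ (l.length : ℕ∞) ≤ Γ.icl ∧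
      (∀ i, ∀ k < l.length, segStart G l i k → (runLen G l i k : ℕ∞) ≤ Γ.iss i) ∧
      (∀ i, (numSegs G l i : ℕ∞) ≤ Γ.isn i) := by
  refine hg.2.resolve_left ?_
  rintro ⟨i, -, hlen⟩
  have : l.length ≤ 0 := by simpa [hncl] using hlen
  have := hg.1.1
  omega

theorem numSegs_le_isn (hg : IsGammaCycle G Γ l) (hncl : Γ.ncl = 0) (i : Fin n) :
    (numSegs G l i : ℕ∞) ≤ Γ.isn i :=
  (hg.intl_of_ncl_eq_zero hncl).2.2.2 i

theorem runLen_le_iss (hg : IsGammaCycle G Γ l) (hncl : Γ.ncl = 0) {i : Fin n} {k : ℕ}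
    (hk : k < l.length) (hs : segStart G l i k) : (runLen G l i k : ℕ∞) ≤ Γ.iss i :=
  (hg.intl_of_ncl_eq_zero hncl).2.2.1 i k hk hs

end IsGammaCycle

section Packing

variable {n : ℕ} {G : PartGraph n} {P : Finset (List ℕ)}

theorem IsPacking.eq_of_mem_of_mem (hP : IsPacking G P) {l l' : List ℕ} {v : ℕ} (hl : l ∈ P)
    (hl' : l' ∈ P) (hv : v ∈ l) (hv' : v ∈ l') : l = l' :=
  by_contra fun hne => hP.2 l hl l' hl' hne v hv hv'

theorem IsPacking.packSize_le_card_verts (hP : IsPacking G P) : packSize P ≤ G.verts.card := by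
  have hdisj : (P : Set (List ℕ)).PairwiseDisjoint List.toFinset := by
    intro l hl l' hl' hne
    simp only [Function.onFun, List.disjoint_toFinset_iff_disjoint]
    exact fun v hv hv' => hP.2 l hl l' hl' hne v hv hv'
  calc packSize P = ∑ l ∈ P, l.toFinset.card :=
        Finset.sum_congr rfl fun l hl => (List.toFinset_card_of_nodup (hP.1 l hl).2.1).symm
    _ = (P.biUnion List.toFinset).card := (Finset.card_biUnion hdisj).symm
    _ ≤ G.verts.card := Finset.card_le_card fun v hv => by
        obtain ⟨l, hl, hv⟩ := Finset.mem_biUnion.mp hv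
        exact (hP.1 l hl).2.2.1 v (List.mem_toFinset.mp hv)

theorem IsPacking.even_packSize (χ : ℕ → ZMod 2) (hχ : ∀ p ∈ G.arcs, χ p.2 = χ p.1 + 1)
    (hP : IsPacking G P) : Even (packSize P) :=
  Finset.even_sum _ fun l hl => (hP.1 l hl).even_length χ hχ

theorem card_filter_le_packUtil {S : Finset ℕ} (hS : ∀ v ∈ S, ∃ l ∈ P, v ∈ l) (i : Fin n) :
    (S.filter (G.country · = i)).card ≤ packUtil G i P := by
  have hsub : S.filter (G.country · = i) ⊆
      P.biUnion fun l => (l.filter (G.country · = i)).toFinset := by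
    intro v hv
    obtain ⟨hvS, hvi⟩ := Finset.mem_filter.mp hv
    obtain ⟨l, hl, hvl⟩ := hS v hvS
    exact Finset.mem_biUnion.mpr ⟨l, hl, by simpa using ⟨hvl, hvi⟩⟩
  calc (S.filter (G.country · = i)).card
      ≤ (P.biUnion fun l => (l.filter (G.country · = i)).toFinset).card := Finset.card_le_card hsub
    _ ≤ ∑ l ∈ P, (l.filter (G.country · = i)).toFinset.card := Finset.card_biUnion_le
    _ ≤ packUtil G i P := Finset.sum_le_sum fun l _ => List.toFinset_card_le _

end Packing

theorem packUtil_zero_add_packUtil_one (G : PartGraph 2) (P : Finset (List ℕ)) :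
    packUtil G 0 P + packUtil G 1 P = packSize P := by
  rw [packUtil, packUtil, packSize, ← Finset.sum_add_distrib]
  refine Finset.sum_congr rfl fun l _ => ?_
  rw [List.length_eq_length_filter_add (G.country · = 0), cycUtil, cycUtil]
  congr 2
  refine List.filter_congr fun v _ => ?_
  have : ∀ a : Fin 2, (a = 1) ↔ ¬ a = 0 := by decide
  simp [this]

theorem mem_uncovered {I : IKEP} {P : Finset (List ℕ)} {v : ℕ} :
    v ∈ uncovered I P ↔ v ∈ I.G.verts ∧ ∀ l ∈ P, v ∉ l :=
  Finset.mem_filter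

theorem exists_mem_of_notMem_uncovered {I : IKEP} {P : Finset (List ℕ)} {v : ℕ}
    (hv : v ∈ I.G.verts) (hvU : v ∉ uncovered I P) : ∃ l ∈ P, v ∈ l := by
  by_contra hnot
  push Not at hnot
  exact hvU (mem_uncovered.mpr ⟨hv, hnot⟩)

theorem card_filter_erase_le_packUtil {I : IKEP} {P : Finset (List ℕ)} {x : ℕ}
    (hU : uncovered I P ⊆ {x}) (i : Fin I.n) :
    ((I.G.verts.erase x).filter (I.G.country · = i)).card ≤ packUtil I.G i P := by
  refine card_filter_le_packUtil (fun v hv => ?_) i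
  obtain ⟨hvx, hv⟩ := Finset.mem_erase.mp hv
  exact exists_mem_of_notMem_uncovered hv fun hvU => hvx (Finset.mem_singleton.mp (hU hvU))

namespace Mechanism

variable (M : Mechanism) {I : IKEP}

theorem le_sum_mul {f : Finset (List ℕ) → ℝ} {c : ℝ} (h : ∀ P, M.dist I P ≠ 0 → c ≤ f P) :
    c ≤ (M.dist I).sum fun P p => p * f P := by
  calc c = (M.dist I).sum fun _ p => p * c := by rw [← Finsupp.sum_mul, M.sum_one, one_mul]
    _ ≤ (M.dist I).sum fun P p => p * f P :=
      Finset.sum_le_sum fun P hP =>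
        mul_le_mul_of_nonneg_left (h P (Finsupp.mem_support_iff.mp hP)) (M.nonneg I P)

theorem sum_mul_le {f : Finset (List ℕ) → ℝ} {c : ℝ} (h : ∀ P, M.dist I P ≠ 0 → f P ≤ c) :
    ((M.dist I).sum fun P p => p * f P) ≤ c := by
  calc ((M.dist I).sum fun P p => p * f P) ≤ (M.dist I).sum fun _ p => p * c :=
      Finset.sum_le_sum fun P hP =>
        mul_le_mul_of_nonneg_left (h P (Finsupp.mem_support_iff.mp hP)) (M.nonneg I P)
    _ = c := by rw [← Finsupp.sum_mul, M.sum_one, one_mul]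

theorem le_expUtil {i : Fin I.n} {c : ℕ} (h : ∀ P, M.dist I P ≠ 0 → c ≤ packUtil I.G i P) :
    (c : ℝ) ≤ expUtil M I i :=
  M.le_sum_mul fun P hP => by exact_mod_cast h P hP

theorem expUtil_add_expUtil_le {i j : Fin I.n} {c : ℕ}
    (h : ∀ P, M.dist I P ≠ 0 → packUtil I.G i P + packUtil I.G j P ≤ c) :
    expUtil M I i + expUtil M I j ≤ c := by
  rw [expUtil, expUtil, ← Finsupp.sum_add]
  simp only [← mul_add]
  exact M.sum_mul_le fun P hP => by exact_mod_cast h P hP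

end Mechanism

/- The definitions filter with classical `Decidable` instances; restating `runLen` and `numSegs`
with the computable ones below lets `decide` check Γ-cycles of the example. -/
section Decidable

instance {n : ℕ} (G : PartGraph n) (l : List ℕ) (i : Fin n) (k : ℕ) :
    Decidable (segStart G l i k) :=
  inferInstanceAs (Decidable (_ ∧ _))

instance {n : ℕ} (G : PartGraph n) (l : List ℕ) : Decidable (IsCycle G l) :=
  inferInstanceAs (Decidable (_ ∧ _))

instance {n : ℕ} (G : PartGraph n) (l : List ℕ) (i : Fin n) : Decidable (IsNationalTo G l i) :=
  inferInstanceAs (Decidable (∀ v ∈ l, G.country v = i))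

instance {n : ℕ} (G : PartGraph n) (l : List ℕ) : Decidable (IsInternational G l) :=
  inferInstanceAs (Decidable (¬ ∃ _, _))

instance {n : ℕ} (G : PartGraph n) (P : Finset (List ℕ)) : Decidable (IsPacking G P) :=
  inferInstanceAs (Decidable (_ ∧ _))

theorem runLen_eq_card_filter {n : ℕ} (G : PartGraph n) (l : List ℕ) (i : Fin n) (k : ℕ) :
    runLen G l i k = ((Finset.range l.length).filter
      fun j => ∀ j' ≤ j, G.country (cyc l (k + j')) = i).card := by
  rw [runLen, Finset.filter_congr_decidable]

theorem numSegs_eq_card_filter {n : ℕ} (G : PartGraph n) (l : List ℕ) (i : Fin n) :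
    numSegs G l i = ((Finset.range l.length).filter fun k => segStart G l i k).card := by
  rw [numSegs, Finset.filter_congr_decidable]

end Decidable

def exGraph : PartGraph 2 where
  verts := {1, 2, 3, 4, 5, 6, 7}
  arcs := {(1, 2), (2, 3), (3, 4), (4, 5), (5, 6), (6, 1), (1, 7), (7, 3), (3, 6), (2, 5), (5, 2)}
  arcs_mem := by decide
  no_loops v := by simp only [Finset.mem_insert, Finset.mem_singleton, Prod.mk.injEq]; omega
  country v := if v ≤ 4 then 0 else 1
  country_nonempty := by decide

theorem exGraph_arcs_cases {u w : ℕ} (h : (u, w) ∈ exGraph.arcs) :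
    (u = 1 ∧ (w = 2 ∨ w = 7)) ∨ (u = 2 ∧ (w = 3 ∨ w = 5)) ∨ (u = 3 ∧ (w = 4 ∨ w = 6)) ∨
      (u = 4 ∧ w = 5) ∨ (u = 5 ∧ (w = 6 ∨ w = 2)) ∨ (u = 6 ∧ w = 1) ∨ (u = 7 ∧ w = 3) := by
  simp only [exGraph, Finset.mem_insert, Finset.mem_singleton, Prod.mk.injEq] at h
  omega

theorem packSize_le_six_of_isPacking_exGraph {P : Finset (List ℕ)} (hP : IsPacking exGraph P) :
    packSize P ≤ 6 := by
  have heven := hP.even_packSize (fun v => if v = 1 ∨ v = 3 ∨ v = 5 then 1 else 0) (by decide)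
  have hle := hP.packSize_le_card_verts
  have hcard : exGraph.verts.card = 7 := rfl
  obtain ⟨k, hk⟩ := heven
  omega

def Γ₀ : Params 2 where
  icl := ⊤
  ncl := 0
  iss := ![⊤, 2]
  isn := ![2, ⊤]
  icl_ne_one := by decide
  ncl_ne_one := by decide
  iss_pos := by decide
  isn_pos := by decide

def Γ₁ : Params 2 := { Γ₀ with isn := ![1, ⊤], isn_pos := by decide }

def Γ₂ : Params 2 := { Γ₀ with iss := ![⊤, 1], iss_pos := by decide }

abbrev exInst (Γ : Params 2) : IKEP := ⟨2, one_le_two, exGraph, Γ⟩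

theorem paramLE_Γ₁_Γ₀ : ParamLE 0 Γ₁ Γ₀ := by
  refine ⟨rfl, rfl, le_rfl, ?_, fun _ _ => rfl, ?_⟩ <;> decide

theorem paramLE_Γ₂_Γ₀ : ParamLE 1 Γ₂ Γ₀ := by
  refine ⟨rfl, rfl, ?_, le_rfl, ?_, fun _ _ => rfl⟩ <;> decide

theorem isGammaPacking_Γ₁ : IsGammaPacking (exInst Γ₁) {[1, 2, 3, 4, 5, 6]} := by
  simp only [IsGammaPacking, IsGammaPackingG, IsGammaCycle, runLen_eq_card_filter,
    numSegs_eq_card_filter]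
  decide

theorem isGammaPacking_Γ₂ : IsGammaPacking (exInst Γ₂) {[1, 7, 3, 6], [2, 5]} := by
  simp only [IsGammaPacking, IsGammaPackingG, IsGammaCycle, runLen_eq_card_filter,
    numSegs_eq_card_filter]
  decide

theorem card_uncovered_Γ₁ : (uncovered (exInst Γ₁) {[1, 2, 3, 4, 5, 6]}).card ≤ 1 := by
  decide

theorem card_uncovered_Γ₂ : (uncovered (exInst Γ₂) {[1, 7, 3, 6], [2, 5]}).card ≤ 1 := by
  decide

section Γ₁

variable {l : List ℕ} {P : Finset (List ℕ)}

theorem seven_notMem_of_isGammaCycle_Γ₁ (hg : IsGammaCycle exGraph Γ₁ l) : 7 ∉ l := by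
  intro h7
  have hc := hg.1
  have hnext7 : l.next 7 h7 = 3 := by have := exGraph_arcs_cases (hc.arc_next h7); omega
  have hprev7 : l.prev 7 h7 = 1 := by have := exGraph_arcs_cases (hc.arc_prev h7); omega
  have h1 : 1 ∈ l := hprev7 ▸ l.prev_mem 7 h7
  have h3 : 3 ∈ l := hnext7 ▸ l.next_mem 7 h7
  have hprev1 : l.prev 1 h1 = 6 := by have := exGraph_arcs_cases (hc.arc_prev h1); omega
  have hprev3 : l.prev 3 h3 = 7 := l.prev_eq_of_next_eq hc.2.1 h7 h3 hnext7
  have hsegs : 2 ≤ numSegs exGraph l 0 :=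
    two_le_numSegs h1 h3 (by decide) (segStart_idxOf h1 rfl (by rw [hprev1]; decide))
      (segStart_idxOf h3 rfl (by rw [hprev3]; decide))
  have hle : (numSegs exGraph l 0 : ℕ∞) ≤ 1 := hg.numSegs_le_isn rfl 0
  have : numSegs exGraph l 0 ≤ 1 := by exact_mod_cast hle
  omega

theorem four_le_packUtil_zero_of_Γ₁ (hP : IsGammaPacking (exInst Γ₁) P)
    (hU : (uncovered (exInst Γ₁) P).card ≤ 1) : 4 ≤ packUtil exGraph 0 P := by
  have h7 : 7 ∈ uncovered (exInst Γ₁) P :=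
    mem_uncovered.mpr ⟨by decide, fun l hl => seven_notMem_of_isGammaCycle_Γ₁ (hP.2 l hl)⟩
  have hsub : uncovered (exInst Γ₁) P ⊆ {7} := fun v hv =>
    Finset.mem_singleton.mpr (Finset.card_le_one.mp hU v hv 7 h7)
  calc 4 = ((exGraph.verts.erase 7).filter (exGraph.country · = 0)).card := by decide
    _ ≤ packUtil exGraph 0 P := card_filter_erase_le_packUtil hsub 0

end Γ₁

section Γ₂

variable {l : List ℕ} {P : Finset (List ℕ)}

theorem next_five_ne_six_of_isGammaCycle_Γ₂ (hg : IsGammaCycle exGraph Γ₂ l) (h5 : 5 ∈ l) :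
    l.next 5 h5 ≠ 6 := by
  intro hnext5
  have hc := hg.1
  have hprev5 : l.prev 5 h5 = 4 ∨ l.prev 5 h5 = 2 := by
    have := exGraph_arcs_cases (hc.arc_prev h5); omega
  have hs : segStart exGraph l 1 (l.idxOf 5) :=
    segStart_idxOf h5 rfl (by rcases hprev5 with h | h <;> rw [h] <;> decide)
  have hrun : 2 ≤ runLen exGraph l 1 (l.idxOf 5) :=
    two_le_runLen hc.1 h5 rfl (by rw [hnext5]; rfl)
  have hle : (runLen exGraph l 1 (l.idxOf 5) : ℕ∞) ≤ 1 :=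
    hg.runLen_le_iss rfl (List.idxOf_lt_length_of_mem h5) hs
  have : runLen exGraph l 1 (l.idxOf 5) ≤ 1 := by exact_mod_cast hle
  omega

theorem prev_six_of_isGammaCycle_Γ₂ (hg : IsGammaCycle exGraph Γ₂ l) (h6 : 6 ∈ l) :
    l.prev 6 h6 = 3 := by
  have hc := hg.1
  have hne5 : l.prev 6 h6 ≠ 5 := fun h =>
    next_five_ne_six_of_isGammaCycle_Γ₂ hg (h ▸ l.prev_mem 6 h6)
      (l.next_eq_of_prev_eq hc.2.1 _ h6 h)
  have := exGraph_arcs_cases (hc.arc_prev h6)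
  omega

theorem four_mem_uncovered_of_Γ₂ (hP : IsGammaPacking (exInst Γ₂) P)
    (hU : (uncovered (exInst Γ₂) P).card ≤ 1) : 4 ∈ uncovered (exInst Γ₂) P := by
  -- A cycle through 4 enters it from 3, and by the previous lemma so would a cycle through 6:
  -- hence 6, and with it 1 (entered only from 6), would stay uncovered.
  by_contra h4
  obtain ⟨l, hl, h4l⟩ := exists_mem_of_notMem_uncovered (by decide) h4
  have hc := hP.1.1 l hl
  have hprev4 : l.prev 4 h4l = 3 := by have := exGraph_arcs_cases (hc.arc_prev h4l); omega
  have h3l : 3 ∈ l := hprev4 ▸ l.prev_mem 4 h4l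
  have h6 : 6 ∈ uncovered (exInst Γ₂) P := by
    refine mem_uncovered.mpr ⟨by decide, fun l' hl' h6l' => ?_⟩
    have hprev6 := prev_six_of_isGammaCycle_Γ₂ (hP.2 l' hl') h6l'
    have h3l' : 3 ∈ l' := hprev6 ▸ l'.prev_mem 6 h6l'
    obtain rfl := hP.1.eq_of_mem_of_mem hl hl' h3l h3l'
    have h64 := (l.next_eq_of_prev_eq hc.2.1 h3l h6l' hprev6).symm.trans
      (l.next_eq_of_prev_eq hc.2.1 h3l h4l hprev4)
    omega
  have h1 : 1 ∈ uncovered (exInst Γ₂) P := by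
    refine mem_uncovered.mpr ⟨by decide, fun l' hl' h1l' => ?_⟩
    have hprev1 : l'.prev 1 h1l' = 6 := by
      have := exGraph_arcs_cases ((hP.1.1 l' hl').arc_prev h1l'); omega
    exact (mem_uncovered.mp h6).2 l' hl' (hprev1 ▸ l'.prev_mem 1 h1l')
  have := Finset.card_le_one.mp hU 1 h1 6 h6
  omega

theorem three_le_packUtil_one_of_Γ₂ (hP : IsGammaPacking (exInst Γ₂) P)
    (hU : (uncovered (exInst Γ₂) P).card ≤ 1) : 3 ≤ packUtil exGraph 1 P := by
  have h4 := four_mem_uncovered_of_Γ₂ hP hU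
  have hsub : uncovered (exInst Γ₂) P ⊆ {4} := fun v hv =>
    Finset.mem_singleton.mpr (Finset.card_le_one.mp hU v hv 4 h4)
  calc 3 = ((exGraph.verts.erase 4).filter (exGraph.country · = 1)).card := by decide
    _ ≤ packUtil exGraph 1 P := card_filter_erase_le_packUtil hsub 1

end Γ₂

/-- There is no mechanism that is both near-perfect and
incentive compatible. -/
theorem no_nearPerfect_and_IC (M : Mechanism) (h : NearPerfectMech M) :
    ¬ IncentiveCompatible M := by
  intro hIC
  have hU₁ : ((4 : ℕ) : ℝ) ≤ expUtil M (exInst Γ₁) 0 :=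
    M.le_expUtil fun P hP => four_le_packUtil_zero_of_Γ₁ (M.supp _ P hP)
      (h _ ⟨_, isGammaPacking_Γ₁, card_uncovered_Γ₁⟩ P hP)
  have hU₂ : ((3 : ℕ) : ℝ) ≤ expUtil M (exInst Γ₂) 1 :=
    M.le_expUtil fun P hP => three_le_packUtil_one_of_Γ₂ (M.supp _ P hP)
      (h _ ⟨_, isGammaPacking_Γ₂, card_uncovered_Γ₂⟩ P hP)
  have hU₀ : expUtil M (exInst Γ₀) 0 + expUtil M (exInst Γ₀) 1 ≤ ((6 : ℕ) : ℝ) :=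
    M.expUtil_add_expUtil_le fun P hP => by
      rw [packUtil_zero_add_packUtil_one]
      exact packSize_le_six_of_isPacking_exGraph (M.supp _ P hP).1
  have hIC₁ : expUtil M (exInst Γ₁) 0 ≤ expUtil M (exInst Γ₀) 0 :=
    hIC (exInst Γ₀) 0 Γ₁ paramLE_Γ₁_Γ₀
  have hIC₂ : expUtil M (exInst Γ₂) 1 ≤ expUtil M (exInst Γ₀) 1 :=
    hIC (exInst Γ₀) 1 Γ₂ paramLE_Γ₂_Γ₀
  push_cast at hU₁ hU₂ hU₀
  linarith
end
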